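/- arXiv:1707.09001 — 8 statements merged into one kernel-verified Lean document; each statement's English description precedes it below -/
import Mathlib

section
/- Let $K$ be a field and $L$ a separable quadratic $K$-algebra with nontrivial involution $l \mapsto \bar{l}$ fixing $K$, and norm $n_L(l) = l\bar{l}$. Let $V$ be a free $L$-module and $h: V \to K$ a quadratic form (over $K$) satisfying $h(lx) = n_L(l)h(x)$ for all $l \in L$, $x \in V$. Then there exists a unique function $s: V \times V \to L$ which is $L$-linear in the first argument, satisfies $s(x,y) = \overline{s(y,x)}$, and $s(x,x) = h(x)$ for all $x \in V$. -/
/-!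
Read in `L`, the polar form `B` of `h` satisfies `B (l x) (l y) = l σ(l) B x y`; polarizing in
`l` and using that `σ π - π` is a unit shows that `B` is `K`-linear. A hermitian `s` with diagonal
`h` satisfies `s x y + s y x = B x y` and `π s x y + σ(π) s y x = B (π x) y`, which forces
`s x y = (σ π - π)⁻¹ (σ(π) B x y - B (π x) y)`. Conversely this formula is additive and both
`K`-linear and `π`-linear in `x`, hence `L`-linear since `K` and `π` generate `L`.
-/

open QuadraticMap

/-- `(σ π - π) * s x y`, for the hermitian form `s` whose diagonal is `q`. -/
def twistedPolar {L V F : Type*} [CommRing L] [AddCommGroup V] [Module L V] [FunLike F L L]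
    (σ : F) (q : V → L) (π : L) (x y : V) : L :=
  σ π * polar q x y - polar q (π • x) y

structure IsHermitianQuadratic {L V F : Type*} [CommRing L] [AddCommGroup V] [Module L V]
    [FunLike F L L] (σ : F) (q : V → L) : Prop where
  map_smul : ∀ (l : L) (x : V), q (l • x) = l * σ l * q x
  polar_add_left : ∀ x x' y : V, polar q (x + x') y = polar q x y + polar q x' y

namespace IsHermitianQuadratic

variable {L V F : Type*} [CommRing L] [AddCommGroup V] [Module L V] [FunLike F L L] {σ : F}
  {q : V → L} (hq : IsHermitianQuadratic σ q)
include hq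

theorem polar_smul_smul (l : L) (x y : V) :
    polar q (l • x) (l • y) = l * σ l * polar q x y := by
  simp only [polar, ← smul_add, hq.map_smul]
  ring

theorem polar_add_right (x y y' : V) : polar q x (y + y') = polar q x y + polar q x y' := by
  rw [polar_comm, hq.polar_add_left, polar_comm q y, polar_comm q y']

theorem twistedPolar_add_left (π : L) (x x' y : V) :
    twistedPolar σ q π (x + x') y = twistedPolar σ q π x y + twistedPolar σ q π x' y := by
  simp only [twistedPolar, smul_add, hq.polar_add_left]
  ring

variable [RingHomClass F L L]

theorem polar_smul_add_smul (l m : L) (x y : V) :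
    polar q (l • x) (m • y) + polar q (m • x) (l • y) = (l * σ m + m * σ l) * polar q x y := by
  have hlm := hq.polar_smul_smul (l + m) x y
  rw [add_smul, add_smul, hq.polar_add_left, hq.polar_add_right, hq.polar_add_right,
    hq.polar_smul_smul, hq.polar_smul_smul, map_add] at hlm
  linear_combination hlm

theorem polar_smul_left_add_polar_smul_right (l : L) (x y : V) :
    polar q (l • x) y + polar q x (l • y) = (l + σ l) * polar q x y := by
  simpa [polar_comm q (1 • x)] using hq.polar_smul_add_smul l 1 x y

/-- The defect `E x y = polar q (c • x) y - c * polar q x y` satisfies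
`2 E (π x) y = (π + σ π) E x y` and `E (π x) (π y) = π σ(π) E x y`; computing `4 E (π x) (π y)`
both ways gives `(σ π - π)² E = 0`. -/
theorem polar_smul_left_of_fixed {π : L} (hπ : IsUnit (σ π - π)) {c : L} (hc : σ c = c)
    (x y : V) : polar q (c • x) y = c * polar q x y := by
  set E : V → V → L := fun x y => polar q (c • x) y - c * polar q x y with hE
  have hanti : ∀ x y, E x y = -E y x := by
    intro x y
    have h := hq.polar_smul_left_add_polar_smul_right c x y
    rw [hc, polar_comm q x (c • y)] at h
    simp only [hE]
    linear_combination h + c * polar_comm q x y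
  have hswap : ∀ x y, E x (π • y) = E (π • x) y := by
    intro x y
    have hcπ := hq.polar_smul_add_smul c π x y
    have hπ1 := hq.polar_smul_left_add_polar_smul_right π x y
    rw [hc] at hcπ
    rw [hanti (π • x)]
    simp only [hE]
    linear_combination hcπ - c * hπ1 - polar_comm q (π • x) (c • y)
      + c * polar_comm q (π • x) y
  have hdouble : ∀ x y, 2 * E (π • x) y = (π + σ π) * E x y := by
    intro x y
    have h₁ := hq.polar_smul_left_add_polar_smul_right π (c • x) y
    have h₂ := hq.polar_smul_left_add_polar_smul_right π x y
    rw [smul_comm π c x] at h₁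
    simp only [hE] at hswap ⊢
    linear_combination h₁ - c * h₂ - hswap x y
  have hnorm : E (π • x) (π • y) = π * σ π * E x y := by
    have h₁ := hq.polar_smul_smul π (c • x) y
    rw [smul_comm π c x] at h₁
    simp only [hE]
    linear_combination h₁ - c * hq.polar_smul_smul π x y
  have hzero : (σ π - π) ^ 2 * E x y = 0 := by
    linear_combination 4 * hnorm - (π + σ π) * hdouble x y - 2 * (π + σ π) * hswap x y
      - 2 * hdouble x (π • y)
  have := (hπ.pow 2).mul_right_eq_zero.mp hzero
  simp only [hE] at this
  linear_combination this

theorem twistedPolar_smul_left_of_fixed {π : L} (hπ : IsUnit (σ π - π)) {c : L} (hc : σ c = c)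
    (x y : V) : twistedPolar σ q π (c • x) y = c * twistedPolar σ q π x y := by
  simp only [twistedPolar, smul_comm π c x, hq.polar_smul_left_of_fixed hπ hc]
  ring

theorem twistedPolar_smul_left_self (π : L) (x y : V) :
    twistedPolar σ q π (π • x) y = π * twistedPolar σ q π x y := by
  have h := hq.polar_smul_left_add_polar_smul_right π (π • x) y
  rw [hq.polar_smul_smul] at h
  simp only [twistedPolar]
  linear_combination -h

theorem twistedPolar_smul_left_of_mem_adjoin {K : Type*} [CommSemiring K] [Algebra K L]
    (hσK : ∀ c : K, σ (algebraMap K L c) = algebraMap K L c) {π : L} (hπ : IsUnit (σ π - π))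
    {l : L} (hl : l ∈ Algebra.adjoin K {π}) (x y : V) :
    twistedPolar σ q π (l • x) y = l * twistedPolar σ q π x y := by
  induction hl using Algebra.adjoin_induction generalizing x with
  | mem w hw =>
    rw [Set.mem_singleton_iff.mp hw]
    exact hq.twistedPolar_smul_left_self π x y
  | algebraMap c => exact hq.twistedPolar_smul_left_of_fixed hπ (hσK c) x y
  | add l m _ _ hl hm => rw [add_smul, hq.twistedPolar_add_left, hl, hm, add_mul]
  | mul l m _ _ hl hm => rw [mul_smul, hl, hm, mul_assoc]

theorem twistedPolar_self (π : L) (x : V) : twistedPolar σ q π x x = (σ π - π) * q x := by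
  have h₂ : q (x + x) = 4 * q x := by
    rw [← two_smul L x, hq.map_smul, map_ofNat]
    ring
  have h₁ : q (π • x + x) = (π + 1) * (σ π + 1) * q x := by
    nth_rw 2 [← one_smul L x]
    rw [← add_smul, hq.map_smul, map_add, map_one]
  simp only [twistedPolar, polar, h₁, h₂, hq.map_smul]
  ring

theorem twistedPolar_eq_neg_map_swap {π : L} (hσπ : σ (σ π) = π) (hσq : ∀ x, σ (q x) = q x)
    (x y : V) : twistedPolar σ q π x y = -σ (twistedPolar σ q π y x) := by
  have hσpolar : ∀ x y, σ (polar q x y) = polar q x y := by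
    intro x y
    simp only [polar, map_sub, hσq]
  have h := hq.polar_smul_left_add_polar_smul_right π x y
  simp only [twistedPolar, map_sub, map_mul, hσπ, hσpolar]
  rw [polar_comm q y x, polar_comm q (π • y) x]
  linear_combination -h

end IsHermitianQuadratic

theorem twistedPolar_eq_sub_mul_of_hermitian {L V F : Type*} [CommRing L] [AddCommGroup V]
    [Module L V] [FunLike F L L] [RingHomClass F L L] {σ : F} {q : V → L} {s : V → V → L}
    (hadd : ∀ x x' y : V, s (x + x') y = s x y + s x' y)
    (hsmul : ∀ (l : L) (x y : V), s (l • x) y = l * s x y)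
    (hsymm : ∀ x y : V, s x y = σ (s y x)) (hdiag : ∀ x : V, s x x = q x) (π : L) (x y : V) :
    twistedPolar σ q π x y = (σ π - π) * s x y := by
  have hadd_right : ∀ a b b' : V, s a (b + b') = s a b + s a b' := by
    intro a b b'
    rw [hsymm, hadd, map_add, ← hsymm, ← hsymm]
  have hpolar : ∀ a b : V, polar q a b = s a b + s b a := by
    intro a b
    simp only [polar, ← hdiag, hadd, hadd_right]
    ring
  have hπ : s y (π • x) = σ π * s y x := by
    rw [hsymm, hsmul, map_mul, ← hsymm]
  simp only [twistedPolar, hpolar, hsmul, hπ]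
  ring

theorem statement0_general
    (K : Type*) [Field K] (L : Type*) [CommRing L] [Algebra K L]
    (σ : L ≃ₐ[K] L) (hσinv : ∀ l, σ (σ l) = l)
    -- `L` is a separable quadratic `K`-algebra: generated by one element `π`
    -- with `σ π - π` invertible (in particular `σ π ≠ π`)
    (π : L) (hπgen : Algebra.adjoin K {π} = ⊤) (hπsep : IsUnit (σ π - π))
    (V : Type*) [AddCommGroup V] [Module L V]
    (h : V → K)
    -- `h` is a quadratic form over `K` :
    (hbil : ∀ x x' y : V,
      (h (x + x' + y) - h (x + x') - h y) =
        (h (x + y) - h x - h y) + (h (x' + y) - h x' - h y))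
    -- `h (l • x) = n_L(l) • h x`, where `n_L l = l * σ l ∈ K` :
    (hherm : ∀ (l : L) (x : V),
      algebraMap K L (h (l • x)) = l * σ l * algebraMap K L (h x)) :
    ∃! s : V → V → L,
      (∀ x x' y : V, s (x + x') y = s x y + s x' y) ∧
      (∀ (l : L) (x y : V), s (l • x) y = l * s x y) ∧
      (∀ x y : V, s x y = σ (s y x)) ∧
      (∀ x : V, s x x = algebraMap K L (h x)) := by
  set q : V → L := fun x => algebraMap K L (h x)
  have hq : IsHermitianQuadratic σ q := by
    refine ⟨hherm, fun x x' y => ?_⟩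
    simp only [q, polar, ← map_sub, ← map_add, hbil]
  obtain ⟨u, hu⟩ := hπsep
  have hσu : σ (↑u⁻¹ : L) = -↑u⁻¹ := by
    have hσ : σ (u : L) = -u := by rw [hu, map_sub, hσinv]; ring
    have h₁ : σ (↑u⁻¹ : L) * -u = 1 := by rw [← hσ, ← map_mul, Units.inv_mul, map_one]
    linear_combination (-↑u⁻¹ : L) * h₁ - σ (↑u⁻¹ : L) * u.mul_inv
  refine ⟨fun x y => ↑u⁻¹ * twistedPolar σ q π x y, ⟨?_, ?_, ?_, ?_⟩, ?_⟩
  · intro x x' y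
    simp only [hq.twistedPolar_add_left, mul_add]
  · intro l x y
    have hl : l ∈ Algebra.adjoin K {π} := hπgen ▸ Algebra.mem_top
    simp only [hq.twistedPolar_smul_left_of_mem_adjoin σ.commutes (hu ▸ u.isUnit) hl,
      mul_left_comm]
  · intro x y
    dsimp only
    rw [map_mul, hσu, hq.twistedPolar_eq_neg_map_swap (hσinv π) (fun x => σ.commutes _) x y]
    ring
  · intro x
    dsimp only
    rw [hq.twistedPolar_self, ← hu, Units.inv_mul_cancel_left]
  · intro s ⟨hadd, hsmul, hsymm, hdiag⟩
    funext x y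
    rw [twistedPolar_eq_sub_mul_of_hermitian hadd hsmul hsymm hdiag, ← hu,
      Units.inv_mul_cancel_left]

/-- existence and uniqueness of the hermitian symmetric form
attached to a quadratic form `h` on a free `L`-module `V` satisfying
`h (l • x) = n_L(l) h x`, where `L` is a separable quadratic `K`-algebra with
involution `σ`. -/
theorem statement0
    (K : Type*) [Field K] (L : Type*) [CommRing L] [Algebra K L]
    (σ : L ≃ₐ[K] L) (hσinv : ∀ l, σ (σ l) = l)
    -- `L` is a separable quadratic `K`-algebra: generated by one element `π`
    -- with `σ π - π` invertible (in particular `σ π ≠ π`)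
    (π : L) (hπgen : Algebra.adjoin K {π} = ⊤) (hπsep : IsUnit (σ π - π))
    (V : Type*) [AddCommGroup V] [Module L V] [Module.Free L V]
    (h : V → K)
    -- `h` is a quadratic form over `K` :
    (hsq : ∀ (c : K) (x : V), h ((algebraMap K L c) • x) = c ^ 2 * h x)
    (hbil : ∀ x x' y : V,
      (h (x + x' + y) - h (x + x') - h y) =
        (h (x + y) - h x - h y) + (h (x' + y) - h x' - h y))
    -- `h (l • x) = n_L(l) • h x`, where `n_L l = l * σ l ∈ K` :
    (hherm : ∀ (l : L) (x : V),
      algebraMap K L (h (l • x)) = l * σ l * algebraMap K L (h x)) :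
    ∃! s : V → V → L,
      (∀ x x' y : V, s (x + x') y = s x y + s x' y) ∧
      (∀ (l : L) (x y : V), s (l • x) y = l * s x y) ∧
      (∀ x y : V, s x y = σ (s y x)) ∧
      (∀ x : V, s x x = algebraMap K L (h x)) :=
  statement0_general K L σ hσinv π hπgen hπsep V h hbil hherm
end

section
/- Let $(V, v, h)$ be a pointed non-degenerate binary hermitian space over $L/K$: $V$ a 2-dimensional $L$-vector space, $h$ a non-degenerate hermitian form, $v \in V$ with $h(v) = 1$. Define multiplication on $V = Lv \oplus L^\perp$ by: $v$ is the identity, $l \cdot x = lx$ for $l \in L$, $y \cdot (lv) = \bar{l}y$ for $y \in L^\perp$, and $y \cdot y = -h(y)v$ for $y \in L^\perp$. Then this multiplication makes $V$ into a quaternion algebra $H_V$ over $K$ whose reduced norm equals $h$, and $l \mapsto lv$ is an embedding of $L$ into $H_V$. -/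
/-- a pointed non-degenerate binary hermitian space `(V, v, h)`
carries a multiplication with identity `v`, determined by the rules
`(l v) ⬝ x = l x`, `y ⬝ (l v) = σ l • y` and `y ⬝ y = -h(y) v` for
`y ⊥ L v`, making `V` a quaternion algebra over `K` whose reduced norm is `h`,
and `l ↦ l v` an embedding of `L`. -/
theorem statement4
    (K : Type*) [Field K] (L : Type*) [Field L] [Algebra K L]
    [Algebra.IsSeparable K L] (hL : Module.finrank K L = 2)
    (σ : L ≃ₐ[K] L) (hσinv : ∀ l, σ (σ l) = l) (hσne : σ ≠ AlgEquiv.refl)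
    (V : Type*) [AddCommGroup V] [Module K V] [Module L V]
    [IsScalarTower K L V] (hV : Module.finrank L V = 2)
    -- the hermitian form `h`, with associated hermitian symmetric form `s`
    (s : V → V → L) (h : V → K)
    (hadd : ∀ x x' y : V, s (x + x') y = s x y + s x' y)
    (hlin : ∀ (l : L) (x y : V), s (l • x) y = l * s x y)
    (hsymm : ∀ x y : V, s x y = σ (s y x))
    (hdiag : ∀ x : V, s x x = algebraMap K L (h x))
    (hnd : ∀ x : V, (∀ y : V, s x y = 0) → x = 0)
    -- the point `v` with `h v = 1`
    (v : V) (hv : h v = 1) :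
    ∃ mul : V → V → V,
      -- bi-additivity
      (∀ x x' y : V, mul (x + x') y = mul x y + mul x' y) ∧
      (∀ x y y' : V, mul x (y + y') = mul x y + mul x y') ∧
      -- the defining rules of the multiplication
      (∀ (l : L) (x : V), mul (l • v) x = l • x) ∧
      (∀ y : V, s v y = 0 → ∀ l : L, mul y (l • v) = σ l • y) ∧
      (∀ y : V, s v y = 0 → mul y y = -(algebraMap K L (h y)) • v) ∧
      -- `V` becomes an associative unital `K`-algebra with identity `v`
      (∀ x y z : V, mul (mul x y) z = mul x (mul y z)) ∧
      (∀ x : V, mul v x = x ∧ mul x v = x) ∧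
      (∀ (c : K) (x y : V), mul ((algebraMap K L c) • x) y
          = (algebraMap K L c) • mul x y ∧
        mul x ((algebraMap K L c) • y) = (algebraMap K L c) • mul x y) ∧
      -- it is central and simple over `K`, i.e. a quaternion algebra
      (∀ x : V, (∀ y : V, mul x y = mul y x) →
        ∃ c : K, x = (algebraMap K L c) • v) ∧
      (∀ I : Submodule K V, (∀ x ∈ I, ∀ y : V, mul x y ∈ I ∧ mul y x ∈ I) →
        I = ⊥ ∨ I = ⊤) ∧
      -- the reduced norm of this quaternion algebra is `h`
      (∀ x y : V, h (mul x y) = h x * h y) ∧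
      (∀ x : V, mul (mul x x)  v -
          (s x v + s v x) • mul x v + (algebraMap K L (h x)) • v = 0) ∧
      -- `l ↦ l v` is an embedding of `L`
      (∀ l l' : L, mul (l • v) (l' • v) = (l * l') • v) ∧
      (Function.Injective fun l : L => l • v) := by
  classical
  have hKL : Function.Injective (algebraMap K L) := (algebraMap K L).injective
  have hσa : ∀ k : K, σ (algebraMap K L k) = algebraMap K L k := fun k => σ.commutes k
  have hadd2 : ∀ (x y y' : V), s x (y + y') = s x y + s x y' := by
    intro x y y'
    rw [hsymm, hadd, map_add, ← hsymm, ← hsymm]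
  have hlin2 : ∀ (l : L) (x y : V), s x (l • y) = σ l * s x y := by
    intro l x y
    rw [hsymm, hlin, map_mul, ← hsymm]
  have hs0 : ∀ y : V, s 0 y = 0 := by
    intro y
    have := hlin 0 0 y
    simpa using this
  have hsub : ∀ x y z : V, s (x - y) z = s x z - s y z := by
    intro x y z
    have h1 := hadd (x - y) y z
    rw [sub_add_cancel] at h1
    rw [h1]; ring
  have hsvv : s v v = 1 := by rw [hdiag, hv, map_one]
  have hvne : v ≠ 0 := by
    intro h0
    have h1 : s v v = 0 := by rw [h0]; exact hs0 0
    rw [hsvv] at h1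
    exact one_ne_zero h1
  -- find w orthogonal to v
  have hex : ∃ x : V, x - s x v • v ≠ 0 := by
    by_contra hc
    push_neg at hc
    have hsp : Submodule.span L {v} = ⊤ := by
      rw [eq_top_iff]
      intro x _
      have h1 : x = s x v • v := by
        have := hc x; rwa [sub_eq_zero] at this
      rw [h1]
      exact Submodule.smul_mem _ _ (Submodule.mem_span_singleton_self v)
    have h1 : Module.finrank L V = 1 := by
      rw [← finrank_top L V, ← hsp, finrank_span_singleton hvne]
    rw [hV] at h1
    norm_num at h1
  obtain ⟨x0, hwne⟩ := hex
  set w : V := x0 - s x0 v • v with hwdef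
  have hwv : s w v = 0 := by
    rw [hwdef, hsub, hlin, hsvv, mul_one, sub_self]
  have hvw : s v w = 0 := by rw [hsymm, hwv, map_zero]
  set e : L := s w w with hedef
  have hE : e = algebraMap K L (h w) := hdiag w
  have hσe : σ e = e := by rw [hE, hσa]
  -- v, w span V
  have hli : LinearIndependent L ![v, w] := by
    rw [LinearIndependent.pair_iff]
    intro c d hcd
    have h1 : s (c • v + d • w) v = 0 := by rw [hcd]; exact hs0 v
    rw [hadd, hlin, hlin, hsvv, hwv, mul_one, mul_zero, add_zero] at h1
    subst h1
    rw [zero_smul, zero_add] at hcd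
    rcases smul_eq_zero.mp hcd with h | h
    · exact ⟨rfl, h⟩
    · exact absurd h hwne
  have hspan : ∀ x : V, ∃ c d : L, c • v + d • w = x := by
    intro x
    have hsp : Submodule.span L {v, w} = ⊤ := by
      have := hli.span_eq_top_of_card_eq_finrank (by simp [hV])
      rwa [show Set.range ![v, w] = {v, w} by
        simp [Matrix.range_cons, Matrix.range_empty]; exact Set.pair_comm w v] at this
    exact Submodule.mem_span_pair.mp (hsp ▸ Submodule.mem_top)
  -- e ≠ 0
  have hene : e ≠ 0 := by
    intro h0
    apply hwne
    apply hnd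
    intro y
    obtain ⟨c, d, rfl⟩ := hspan y
    rw [hadd2, hlin2, hlin2, hwv, ← hedef, h0]
    ring
  -- coordinate lemmas
  have aco : ∀ c d : L, s (c • v + d • w) v = c := by
    intro c d
    rw [hadd, hlin, hlin, hsvv, hwv]; ring
  have bco : ∀ c d : L, s (c • v + d • w) w = d * e := by
    intro c d
    rw [hadd, hlin, hlin, hvw, ← hedef]; ring
  have scoord : ∀ c d c' d' : L,
      s (c • v + d • w) (c' • v + d' • w) = c * σ c' + d * σ d' * e := by
    intro c d c' d'
    rw [hadd2, hlin2, hlin2, aco, bco]; ring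
  -- the multiplication
  set q : V → V → V := fun x y =>
    (s x v * s y v - (s x w * e⁻¹) * σ (s y w * e⁻¹) * e) • v
      + (s x v * (s y w * e⁻¹) + (s x w * e⁻¹) * σ (s y v)) • w with hqdef
  have mulc : ∀ c d c' d' : L, q (c • v + d • w) (c' • v + d' • w)
      = (c * c' - d * σ d' * e) • v + (c * d' + d * σ c') • w := by
    intro c d c' d'
    simp only [hqdef, aco, bco, mul_inv_cancel_right₀ hene]
  have hvform : ∀ l : L, l • v = l • v + (0 : L) • w := by intro l; module
  -- clause 3 first (used later)
  have mull : ∀ (l : L) (x : V), q (l • v) x = l • x := by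
    intro l x
    obtain ⟨c, d, rfl⟩ := hspan x
    rw [hvform l, mulc]
    module
  -- identity
  have hid : ∀ x : V, q v x = x ∧ q x v = x := by
    intro x
    constructor
    · have h1 : q v x = q ((1 : L) • v) x := by rw [one_smul]
      rw [h1, mull, one_smul]
    · obtain ⟨c, d, rfl⟩ := hspan x
      have h1 : q (c • v + d • w) v = q (c • v + d • w) ((1:L) • v + (0:L) • w) := by
        rw [one_smul, zero_smul, add_zero]
      rw [h1, mulc]
      simp only [map_zero, map_one]
      module
  refine ⟨q, ?_, ?_, mull, ?_, ?_, ?_, hid, ?_, ?_, ?_, ?_, ?_, ?_, ?_⟩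
  · -- left additivity
    intro x x' y
    obtain ⟨c, d, rfl⟩ := hspan x
    obtain ⟨c', d', rfl⟩ := hspan x'
    obtain ⟨p, r, rfl⟩ := hspan y
    rw [show (c • v + d • w) + (c' • v + d' • w) = (c + c') • v + (d + d') • w by module,
      mulc, mulc, mulc]
    module
  · -- right additivity
    intro x y y'
    obtain ⟨c, d, rfl⟩ := hspan x
    obtain ⟨c', d', rfl⟩ := hspan y
    obtain ⟨p, r, rfl⟩ := hspan y'
    rw [show (c' • v + d' • w) + (p • v + r • w) = (c' + p) • v + (d' + r) • w by module,
      mulc, mulc, mulc]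
    simp only [map_add]
    module
  · -- y ⬝ (l v) = σ l • y
    intro y hy l
    obtain ⟨c, d, rfl⟩ := hspan y
    have hc : c = 0 := by
      have h1 : σ c = 0 := by rw [← aco c d, ← hsymm]; exact hy
      have := congrArg σ h1
      rwa [hσinv, map_zero] at this
    subst hc
    rw [hvform l, mulc]
    simp only [map_zero]
    module
  · -- y ⬝ y = -h(y) v
    intro y hy
    obtain ⟨c, d, rfl⟩ := hspan y
    have hc : c = 0 := by
      have h1 : σ c = 0 := by rw [← aco c d, ← hsymm]; exact hy
      have := congrArg σ h1
      rwa [hσinv, map_zero] at this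
    subst hc
    rw [← hdiag, mulc, scoord]
    simp only [map_zero]
    module
  · -- associativity
    intro x y z
    obtain ⟨c, d, rfl⟩ := hspan x
    obtain ⟨c', d', rfl⟩ := hspan y
    obtain ⟨p, r, rfl⟩ := hspan z
    rw [mulc c d c' d', mulc c' d' p r, mulc, mulc]
    simp only [map_add, map_sub, map_mul, hσinv, hσe]
    module
  · -- K-bilinearity
    intro k x y
    obtain ⟨c, d, rfl⟩ := hspan x
    obtain ⟨c', d', rfl⟩ := hspan y
    constructor
    · rw [show (algebraMap K L k) • (c • v + d • w)
          = (algebraMap K L k * c) • v + (algebraMap K L k * d) • w by module,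
        mulc, mulc]
      module
    · rw [show (algebraMap K L k) • (c' • v + d' • w)
          = (algebraMap K L k * c') • v + (algebraMap K L k * d') • w by module,
        mulc, mulc]
      simp only [map_mul, hσa]
      module
  · -- center
    intro x hx
    obtain ⟨c, d, rfl⟩ := hspan x
    obtain ⟨l0, hl0⟩ : ∃ l : L, σ l ≠ l := by
      by_contra hc
      push_neg at hc
      exact hσne (AlgEquiv.ext hc)
    have h1 := hx ((0 : L) • v + (1 : L) • w)
    rw [mulc, mulc] at h1
    have hA1 := congrArg (fun z => s z v) h1
    simp only [aco] at hA1
    have hB1 := congrArg (fun z => s z w) h1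
    simp only [bco] at hB1
    have hd : d = σ d := by
      have h9 : (d - σ d) * e = 0 := by
        simp only [map_one] at hA1
        linear_combination -hA1
      rcases mul_eq_zero.mp h9 with h9 | h9
      · exact sub_eq_zero.mp h9
      · exact absurd h9 hene
    have hcσ : σ c = c := by
      have := mul_right_cancel₀ hene hB1
      simpa using this.symm
    have h2 := hx ((0 : L) • v + l0 • w)
    rw [mulc, mulc] at h2
    have hA2 := congrArg (fun z => s z v) h2
    simp only [aco] at hA2
    have hd0 : d = 0 := by
      have h9 : (d * σ l0 - l0 * σ d) * e = 0 := by linear_combination -hA2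
      have h3 : d * σ l0 = l0 * σ d := by
        rcases mul_eq_zero.mp h9 with h9 | h9
        · linear_combination h9
        · exact absurd h9 hene
      rw [← hd] at h3
      by_contra hdne
      apply hl0
      have h4 : d * (σ l0 - l0) = 0 := by linear_combination h3
      rcases mul_eq_zero.mp h4 with h5 | h5
      · exact absurd h5 hdne
      · exact sub_eq_zero.mp h5
    subst hd0
    -- fixed field argument
    haveI : FiniteDimensional K L :=
      FiniteDimensional.of_finrank_pos (by rw [hL]; norm_num)
    have hfix : ∃ k : K, algebraMap K L k = c := by
      by_contra hcon
      push_neg at hcon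
      have hli2 : LinearIndependent K ![(1 : L), c] := by
        rw [LinearIndependent.pair_iff]
        intro p t hpt
        by_cases ht : t = 0
        · subst ht
          refine ⟨?_, rfl⟩
          rw [zero_smul, add_zero, ← algebraMap_smul L p (1 : L), smul_eq_mul, mul_one] at hpt
          exact hKL (by rw [hpt, map_zero])
        · exfalso
          apply hcon (-p / t)
          rw [← algebraMap_smul L p (1 : L), smul_eq_mul, mul_one,
            ← algebraMap_smul L t c, smul_eq_mul] at hpt
          have ht' : algebraMap K L t ≠ 0 := fun h0 => ht (hKL (by rw [h0, map_zero]))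
          rw [map_div₀, map_neg, div_eq_iff ht']
          linear_combination -hpt
      set S := AlgHom.equalizer σ.toAlgHom (AlgHom.id K L) with hSdef
      have hsub2 : Submodule.span K {(1 : L), c} ≤ Subalgebra.toSubmodule S := by
        rw [Submodule.span_le]
        intro z hz
        rcases hz with hz | hz
        · rw [hz]; exact S.one_mem
        · rw [Set.mem_singleton_iff] at hz
          rw [hz]
          exact hcσ
      have h2le : 2 ≤ Module.finrank K (Subalgebra.toSubmodule S) := by
        have hcard : Module.finrank K (Submodule.span K (Set.range ![(1 : L), c])) = 2 := by
          rw [finrank_span_eq_card hli2]; simp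
        have hrange : Set.range ![(1 : L), c] = {(1 : L), c} := by
          simp [Matrix.range_cons, Matrix.range_empty]; exact Set.pair_comm c 1
        rw [hrange] at hcard
        rw [← hcard]
        exact Submodule.finrank_mono hsub2
      have hle2 : Module.finrank K (Subalgebra.toSubmodule S) ≤ 2 := by
        rw [← hL]
        exact Submodule.finrank_le _
      have hStop : Subalgebra.toSubmodule S = ⊤ :=
        Submodule.eq_top_of_finrank_eq (by rw [hL]; omega)
      apply hσne
      apply AlgEquiv.ext
      intro z
      have hz : z ∈ Subalgebra.toSubmodule S := by rw [hStop]; trivial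
      exact hz
    obtain ⟨k, hk⟩ := hfix
    exact ⟨k, by rw [hk]; module⟩
  · -- simplicity
    intro I hI
    rcases eq_or_ne I ⊥ with hb | hb
    · exact Or.inl hb
    right
    obtain ⟨l0, hl0⟩ : ∃ l : L, σ l ≠ l := by
      by_contra hc
      push_neg at hc
      exact hσne (AlgEquiv.ext hc)
    obtain ⟨x, hxI, hxne⟩ := (Submodule.ne_bot_iff I).mp hb
    obtain ⟨c, d, rfl⟩ := hspan x
    have hstepA : ∃ d0 : L, d0 ≠ 0 ∧ d0 • w ∈ I := by
      by_cases hd : d = 0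
      · have hcne : c ≠ 0 := by
          intro h0
          apply hxne
          rw [hd, h0, zero_smul, zero_smul, add_zero]
        have h1 : q (c • v + d • w) ((0 : L) • v + (1 : L) • w) ∈ I :=
          (hI _ hxI _).1
        rw [mulc] at h1
        refine ⟨c, hcne, ?_⟩
        have heq : (c * 0 - d * σ 1 * e) • v + (c * 1 + d * σ 0) • w = c • w := by
          rw [hd]
          simp only [map_zero, map_one]
          module
        rwa [heq] at h1
      · have h1 : q (l0 • v + (0 : L) • w) (c • v + d • w) ∈ I := (hI _ hxI _).2
        have h2 : q (c • v + d • w) (l0 • v + (0 : L) • w) ∈ I := (hI _ hxI _).1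
        have h3 := I.sub_mem h1 h2
        rw [mulc, mulc] at h3
        refine ⟨d * (l0 - σ l0), ?_, ?_⟩
        · exact mul_ne_zero hd (sub_ne_zero.mpr (Ne.symm hl0))
        · have heq : ((l0 * c - 0 * σ d * e) • v + (l0 * d + 0 * σ c) • w)
              - ((c * l0 - d * σ 0 * e) • v + (c * 0 + d * σ l0) • w)
              = (d * (l0 - σ l0)) • w := by
            simp only [map_zero]
            module
          rwa [heq] at h3
    obtain ⟨d0, hd0, hd0I⟩ := hstepA
    have hBw : ∀ dd : L, dd • w ∈ I := by
      intro dd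
      have h1 : q ((dd * d0⁻¹) • v) (d0 • w) ∈ I := (hI _ hd0I _).2
      rw [mull, smul_smul, mul_assoc, inv_mul_cancel₀ hd0, mul_one] at h1
      exact h1
    have hwI : w ∈ I := by
      have := hBw 1
      rwa [one_smul] at this
    have hwform : (0 : L) • v + (1 : L) • w = w := by module
    have hmulww : q w w = (-e) • v := by
      rw [← hwform, mulc]
      simp only [map_zero, map_one]
      module
    have hBv : ∀ cc : L, cc • v ∈ I := by
      intro cc
      have h1 : q w w ∈ I := (hI _ hwI _).1
      rw [hmulww] at h1
      have h2 : q ((cc * (-e)⁻¹) • v) ((-e) • v) ∈ I := (hI _ h1 _).2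
      rw [mull, smul_smul, mul_assoc, inv_mul_cancel₀ (neg_ne_zero.mpr hene),
        mul_one] at h2
      exact h2
    rw [Submodule.eq_top_iff']
    intro x
    obtain ⟨p, r, rfl⟩ := hspan x
    exact I.add_mem (hBv p) (hBw r)
  · -- norm multiplicativity
    intro x y
    obtain ⟨c, d, rfl⟩ := hspan x
    obtain ⟨c', d', rfl⟩ := hspan y
    apply hKL
    rw [map_mul, ← hdiag, ← hdiag, ← hdiag, mulc, scoord, scoord, scoord]
    simp only [map_add, map_sub, map_mul, hσinv, hσe]
    ring
  · -- characteristic polynomial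
    intro x
    obtain ⟨c, d, rfl⟩ := hspan x
    have hsvx : s v (c • v + d • w) = σ c := by rw [hsymm, aco]
    rw [← hdiag, (hid _).2, (hid _).2, mulc, aco, hsvx, scoord]
    module
  · -- embedding multiplicativity
    intro l l'
    rw [mull, smul_smul]
  · -- injectivity
    intro l l' hll
    simp only at hll
    have h1 : (l - l') • v = 0 := by rw [sub_smul, hll, sub_self]
    rcases smul_eq_zero.mp h1 with h | h
    · exact sub_eq_zero.mp h
    · exact absurd h hvne
end

section
/- Let $(V, v, h)$ be a pointed non-degenerate binary hermitian space and $H_V$ the associated quaternion algebra with identity $v$. If $u \in V$ satisfies $h(u) = 1$, then right multiplication by $u$ in $H_V$ gives an isomorphism of pointed hermitian spaces $(V, v, h) \cong (V, u, h)$; that is, the map $x \mapsto x \cdot u$ is an $L$-linear bijection sending $v$ to $u$ and preserving $h$. -/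
/-- in the quaternion algebra `H_V` attached to a pointed
non-degenerate binary hermitian space `(V, v, h)`, right multiplication by any
`u` with `h u = 1` is an isomorphism of pointed hermitian spaces
`(V, v, h) ≅ (V, u, h)`. -/
theorem statement5
    (K : Type*) [Field K] (L : Type*) [Field L] [Algebra K L]
    [Algebra.IsSeparable K L] (hL : Module.finrank K L = 2)
    (σ : L ≃ₐ[K] L) (hσinv : ∀ l, σ (σ l) = l) (hσne : σ ≠ AlgEquiv.refl)
    (V : Type*) [AddCommGroup V] [Module K V] [Module L V]
    [IsScalarTower K L V] (hV : Module.finrank L V = 2)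
    (s : V → V → L) (h : V → K)
    (hadd : ∀ x x' y : V, s (x + x') y = s x y + s x' y)
    (hlin : ∀ (l : L) (x y : V), s (l • x) y = l * s x y)
    (hsymm : ∀ x y : V, s x y = σ (s y x))
    (hdiag : ∀ x : V, s x x = algebraMap K L (h x))
    (hnd : ∀ x : V, (∀ y : V, s x y = 0) → x = 0)
    (v : V) (hv : h v = 1)
    -- `mul` is the multiplication of the quaternion algebra `H_V` with
    -- identity `v` and reduced norm `h` :
    (mul : V → V → V)
    (hmadd : ∀ x x' y : V, mul (x + x') y = mul x y + mul x' y)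
    (hmadd' : ∀ x y y' : V, mul x (y + y') = mul x y + mul x y')
    (hml : ∀ (l : L) (x : V), mul (l • v) x = l • x)
    (hmlin : ∀ (l : L) (x y : V), mul (l • x) y = l • mul x y)
    (hassoc : ∀ x y z : V, mul (mul x y) z = mul x (mul y z))
    (hone : ∀ x : V, mul v x = x ∧ mul x v = x)
    (hnorm : ∀ x y : V, h (mul x y) = h x * h y)
    -- `x ⬝ conj x = h x • v`, where `conj x = tr(x) • v - x` :
    (hconj : ∀ x : V,
      mul x ((s x v + s v x) • v - x) = (algebraMap K L (h x)) • v)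
    -- any other point `u` representing `1`
    (u : V) (hu : h u = 1) :
    Function.Bijective (fun x : V => mul x u) ∧
    (∀ x x' : V, mul (x + x') u = mul x u + mul x' u) ∧
    (∀ (l : L) (x : V), mul (l • x) u = l • mul x u) ∧
    mul v u = u ∧
    (∀ x : V, h (mul x u) = h x) := by
  have hfd : FiniteDimensional L V := by
    refine FiniteDimensional.of_finrank_pos ?_
    rw [hV]; norm_num
  set cu : V := (s u v + s v u) • v - u with hcu
  have hucu : mul u cu = v := by
    have := hconj u
    rw [hu, map_one, one_smul] at this
    exact this
  have hinj : Function.Injective (fun x : V => mul x u) := by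
    intro x x' hxx'
    have : mul (mul x u) cu = mul (mul x' u) cu := by simp only at hxx'; rw [hxx']
    rwa [hassoc, hassoc, hucu, (hone x).2, (hone x').2] at this
  let f : V →ₗ[L] V :=
    { toFun := fun x => mul x u
      map_add' := fun x y => hmadd x y u
      map_smul' := fun l x => hmlin l x u }
  refine ⟨⟨hinj, ?_⟩, fun x x' => hmadd x x' u, fun l x => hmlin l x u,
    (hone u).1, fun x => by rw [hnorm, hu, mul_one]⟩
  have := (LinearMap.injective_iff_surjective (f := f)).mp hinj
  exact this
end

section
/- Let $A$ be a Dedekind domain with fraction field $K$, $L/K$ a separable quadratic extension, $B$ the integral closure of $A$ in $L$. Let $(\Lambda, v, h)$ be a pointed integral binary $B$-hermitian module: $\Lambda$ a projective $B$-module of rank 2 with non-degenerate hermitian form $h$ on $V = \Lambda \otimes_A K$ satisfying $h(\Lambda) \subseteq A$, and $v \in \Lambda$ with $h(v) = 1$. Then $\Lambda$, viewed inside the quaternion algebra $H_V$ with identity $v$, is closed under multiplication, i.e., $\Lambda$ is an order in $H_V$. -/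
/-!
Writing `x = s(x,v) v + x₀` with `x₀ ⊥ v`, and using that `v^⊥` is a line, on which the product is
`x₀ y₀ = -s(x₀,y₀) v`, one gets `x y = s(x,v) y + σ(s(y,v)) x - s(x,y) v` in `H_V`.
For `u, u' ∈ Λ` the trace `s(u,u') + σ(s(u,u'))` lies in `A` by polarization, and when `u, u'` are
`L`-collinear, `s(u,u')` is integral over `A` because its norm is `h(u) h(u')`.
Invertibility of the fractional `B`-ideal `χ(Λ)`, where `χ = s(·, w₀)` for some `0 ≠ w₀ ⊥ v`,
gives `w` such that every `u ∈ Λ` is `b v + c w` with `b ∈ B` and `c w ∈ Λ`; for two such vectors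
the coefficients in the product formula are integral by the two facts above.
-/

open Polynomial in
theorem isIntegral_of_add_eq_of_mul_eq {A R : Type*} [CommRing A] [CommRing R] [Algebra A R]
    {t t' : R} {p q : A} (hadd : t + t' = algebraMap A R p) (hmul : t * t' = algebraMap A R q) :
    IsIntegral A t := by
  refine ⟨X ^ 2 - C p * X + C q, by monicity!, ?_⟩
  simp only [eval₂_add, eval₂_sub, eval₂_mul, eval₂_pow, eval₂_X, eval₂_C, ← hadd, ← hmul]
  ring

theorem exists_eq_one_forall_smul_mem {R L V : Type*} [CommRing R] [IsDedekindDomain R] [Field L]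
    [Algebra R L] [IsFractionRing R L] [AddCommGroup V] [Module L V] [Module R V]
    [IsScalarTower R L V] {Λ : Submodule R V} (hΛ : Λ.FG) (χ : V →ₗ[L] L)
    (hχ : ∃ u ∈ Λ, χ u ≠ 0) : ∃ w, χ w = 1 ∧ ∀ u ∈ Λ, χ u • w ∈ Λ := by
  let I : FractionalIdeal (nonZeroDivisors R) L :=
    ⟨Λ.map (χ.restrictScalars R), FractionalIdeal.isFractional_of_fg (hΛ.map _)⟩
  have hI : I ≠ 0 := by
    obtain ⟨u, hu, hχu⟩ := hχ
    intro h0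
    have : χ u ∈ I := Submodule.mem_map_of_mem hu
    rw [h0, FractionalIdeal.mem_zero_iff] at this
    exact hχu this
  have h1 : (1 : L) ∈ (I : Submodule R L) * (I⁻¹ : FractionalIdeal (nonZeroDivisors R) L) := by
    rw [← FractionalIdeal.coe_mul, mul_inv_cancel₀ hI]
    exact FractionalIdeal.one_mem_one _
  refine Submodule.mul_induction_on h1 ?_ ?_
  · rintro _ ⟨u, hu, rfl⟩ n hn
    refine ⟨n • u, by simp [mul_comm], fun u' hu' => ?_⟩
    obtain ⟨r, hr⟩ := (FractionalIdeal.mem_one_iff _).1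
      ((FractionalIdeal.mem_inv_iff hI).1 hn _ (Submodule.mem_map_of_mem hu'))
    rw [smul_smul, mul_comm, show n * χ u' = algebraMap R L r from hr.symm, algebraMap_smul]
    exact Λ.smul_mem r hu
  · rintro _ _ ⟨w, hw, hwΛ⟩ ⟨w', hw', hw'Λ⟩
    refine ⟨w + w', by rw [map_add, hw, hw'], fun u hu => ?_⟩
    rw [smul_add]
    exact Λ.add_mem (hwΛ u hu) (hw'Λ u hu)

theorem exists_eq_one_forall_smul_mem_of_integralClosure (K : Type*) {A L V : Type*} [CommRing A]
    [IsDedekindDomain A] [Field K] [Algebra A K] [IsFractionRing A K] [Field L] [Algebra K L]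
    [Algebra A L] [IsScalarTower A K L] [FiniteDimensional K L] [Algebra.IsSeparable K L]
    [AddCommGroup V] [Module L V] [Module A V] [IsScalarTower A L V] {Λ : Submodule A V}
    (hΛB : ∀ b ∈ integralClosure A L, ∀ x ∈ Λ, b • x ∈ Λ) (hΛ : Λ.FG) (χ : V →ₗ[L] L)
    (hχ : ∃ u ∈ Λ, χ u ≠ 0) : ∃ w, χ w = 1 ∧ ∀ u ∈ Λ, χ u • w ∈ Λ := by
  let ΛB : Submodule (integralClosure A L) V :=
    { Λ with smul_mem' := fun b x hx => hΛB b b.2 x hx }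
  obtain ⟨S, hS⟩ := hΛ
  have hfg : ΛB.FG := by
    refine ⟨S, le_antisymm (Submodule.span_le.2 fun x hx => ?_) fun x (hx : x ∈ Λ) => ?_⟩
    · show x ∈ Λ
      rw [← hS]
      exact Submodule.subset_span hx
    · rw [← hS] at hx
      exact Submodule.span_le_restrictScalars A (integralClosure A L) (S : Set V) hx
  have : IsDedekindDomain (integralClosure A L) := integralClosure.isDedekindDomain A K L
  have : IsFractionRing (integralClosure A L) L :=
    integralClosure.isFractionRing_of_finite_extension K L
  exact exists_eq_one_forall_smul_mem hfg χ hχ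

section Hermitian

variable {K L V : Type*} [Field K] [Field L] [Algebra K L] [AddCommGroup V] [Module L V]

structure IsHermitianForm (σ : L ≃ₐ[K] L) (s : V → V → L) : Prop where
  add_left : ∀ x x' y, s (x + x') y = s x y + s x' y
  smul_left : ∀ (l : L) x y, s (l • x) y = l * s x y
  conj_symm : ∀ x y, s x y = σ (s y x)

namespace IsHermitianForm

variable {σ : L ≃ₐ[K] L} {s : V → V → L}

def toLinearMap (hs : IsHermitianForm σ s) (y : V) : V →ₗ[L] L where
  toFun x := s x y
  map_add' x x' := hs.add_left x x' y
  map_smul' l x := hs.smul_left l x y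

theorem zero_left (hs : IsHermitianForm σ s) (y : V) : s 0 y = 0 :=
  map_zero (hs.toLinearMap y)

theorem sub_left (hs : IsHermitianForm σ s) (x x' y : V) : s (x - x') y = s x y - s x' y :=
  map_sub (hs.toLinearMap y) x x'

theorem add_right (hs : IsHermitianForm σ s) (x y y' : V) : s x (y + y') = s x y + s x y' := by
  rw [hs.conj_symm, hs.add_left, map_add, ← hs.conj_symm, ← hs.conj_symm]

theorem sub_right (hs : IsHermitianForm σ s) (x y y' : V) : s x (y - y') = s x y - s x y' := by
  rw [hs.conj_symm, hs.sub_left, map_sub, ← hs.conj_symm, ← hs.conj_symm]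

theorem smul_right (hs : IsHermitianForm σ s) (l : L) (x y : V) : s x (l • y) = σ l * s x y := by
  rw [hs.conj_symm, hs.smul_left, map_mul, ← hs.conj_symm]

theorem eq_zero_comm (hs : IsHermitianForm σ s) {x y : V} : s x y = 0 ↔ s y x = 0 := by
  rw [hs.conj_symm x y, map_eq_zero_iff σ σ.injective]

theorem add_conj_eq (hs : IsHermitianForm σ s) (x y : V) :
    s x y + σ (s x y) = s (x + y) (x + y) - s x x - s y y := by
  rw [← hs.conj_symm y x, hs.add_left, hs.add_right, hs.add_right]
  ring

theorem mul_conj_smul_smul (hs : IsHermitianForm σ s) (a b : L) (w : V) :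
    s (a • w) (b • w) * σ (s (a • w) (b • w)) = s (a • w) (a • w) * s (b • w) (b • w) := by
  rw [← hs.conj_symm]
  simp only [hs.smul_left, hs.smul_right]
  ring

variable {v : V}

theorem orthogonal_sub_smul (hs : IsHermitianForm σ s) (hv : s v v = 1) (x : V) :
    s v (x - s x v • v) = 0 := by
  rw [hs.sub_right, hs.smul_right, hv, mul_one, hs.conj_symm v x, sub_self]

theorem finrank_ker_toLinearMap (hs : IsHermitianForm σ s) (hv : s v v = 1)
    (hV : Module.finrank L V = 2) : Module.finrank L (LinearMap.ker (hs.toLinearMap v)) = 1 := by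
  have : FiniteDimensional L V := Module.finite_of_finrank_eq_succ hV
  have hsurj : Function.Surjective (hs.toLinearMap v) := fun l =>
    ⟨l • v, show s (l • v) v = l by rw [hs.smul_left, hv, mul_one]⟩
  have := LinearMap.finrank_range_add_finrank_ker (hs.toLinearMap v)
  rw [LinearMap.range_eq_top.2 hsurj, finrank_top, Module.finrank_self, hV] at this
  omega

theorem exists_orthogonal_ne_zero (hs : IsHermitianForm σ s) (hv : s v v = 1)
    (hV : Module.finrank L V = 2) : ∃ w, s v w = 0 ∧ w ≠ 0 := by
  obtain ⟨⟨w, hw⟩, hw0, -⟩ := finrank_eq_one_iff'.1 (hs.finrank_ker_toLinearMap hv hV)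
  exact ⟨w, hs.eq_zero_comm.2 hw, fun h => hw0 (Subtype.ext h)⟩

theorem exists_smul_eq_of_orthogonal (hs : IsHermitianForm σ s) (hv : s v v = 1)
    (hV : Module.finrank L V = 2) {x y : V} (hx : s v x = 0) (hy : s v y = 0) (hx0 : x ≠ 0) :
    ∃ c : L, c • x = y := by
  have hmem {z : V} (hz : s v z = 0) : z ∈ LinearMap.ker (hs.toLinearMap v) :=
    hs.eq_zero_comm.1 hz
  obtain ⟨c, hc⟩ := (finrank_eq_one_iff_of_nonzero' ⟨x, hmem hx⟩ (by simpa using hx0)).1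
    (hs.finrank_ker_toLinearMap hv hV) ⟨y, hmem hy⟩
  exact ⟨c, congrArg Subtype.val hc⟩

theorem exists_smul_add_smul_eq (hs : IsHermitianForm σ s) (hv : s v v = 1)
    (hV : Module.finrank L V = 2) {w : V} (hw : s v w = 0) (hw0 : w ≠ 0) (y : V) :
    ∃ c : L, s y v • v + c • w = y := by
  obtain ⟨c, hc⟩ := hs.exists_smul_eq_of_orthogonal hv hV hw (hs.orthogonal_sub_smul hv y) hw0
  exact ⟨c, by rw [hc, add_sub_cancel]⟩

end IsHermitianForm

end Hermitian

section Quaternion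

variable {K L V : Type*} [Field K] [Field L] [Algebra K L] [AddCommGroup V] [Module L V]

structure IsQuaternionMul (σ : L ≃ₐ[K] L) (s : V → V → L) (v : V) (mul : V → V → V) : Prop where
  add_left : ∀ x x' y, mul (x + x') y = mul x y + mul x' y
  add_right : ∀ x y y', mul x (y + y') = mul x y + mul x y'
  smul_unit_mul : ∀ (l : L) x, mul (l • v) x = l • x
  smul_mul : ∀ (l : L) x y, mul (l • x) y = l • mul x y
  mul_smul_unit : ∀ y, s v y = 0 → ∀ l : L, mul y (l • v) = σ l • y
  mul_self : ∀ y, s v y = 0 → mul y y = -s y y • v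
  assoc : ∀ x y z, mul (mul x y) z = mul x (mul y z)

namespace IsQuaternionMul

variable {σ : L ≃ₐ[K] L} {s : V → V → L} {v : V} {mul : V → V → V}

theorem zero_mul (hm : IsQuaternionMul σ s v mul) (y : V) : mul 0 y = 0 := by
  simpa using hm.add_left 0 0 y

theorem mul_of_orthogonal (hm : IsQuaternionMul σ s v mul) (hs : IsHermitianForm σ s)
    (hv : s v v = 1) (hV : Module.finrank L V = 2) {x y : V} (hx : s v x = 0) (hy : s v y = 0) :
    mul x y = -s x y • v := by
  rcases eq_or_ne x 0 with rfl | hx0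
  · rw [hm.zero_mul, hs.zero_left, neg_zero, zero_smul]
  obtain ⟨c, rfl⟩ := hs.exists_smul_eq_of_orthogonal hv hV hx hy hx0
  calc mul x (c • x) = mul (mul x (c • v)) x := by rw [hm.assoc, hm.smul_unit_mul]
    _ = -s x (c • x) • v := by
      rw [hm.mul_smul_unit x hx, hm.smul_mul, hm.mul_self x hx, hs.smul_right, smul_smul, mul_neg]

theorem mul_eq (hm : IsQuaternionMul σ s v mul) (hs : IsHermitianForm σ s) (hv : s v v = 1)
    (hV : Module.finrank L V = 2) (x y : V) :
    mul x y = s x v • y + σ (s y v) • x - s x y • v := by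
  have hx₀ := hs.orthogonal_sub_smul hv x
  have hy₀ := hs.orthogonal_sub_smul hv y
  calc mul x y = mul (s x v • v + (x - s x v • v)) y := by rw [add_sub_cancel]
    _ = s x v • y + mul (x - s x v • v) (s y v • v + (y - s y v • v)) := by
        rw [hm.add_left, hm.smul_unit_mul, add_sub_cancel]
    _ = s x v • y + (σ (s y v) • (x - s x v • v) + -s (x - s x v • v) (y - s y v • v) • v) := by
        rw [hm.add_right, hm.mul_smul_unit _ hx₀, hm.mul_of_orthogonal hs hv hV hx₀ hy₀]
    _ = s x v • y + σ (s y v) • x - s x y • v := by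
        rw [hs.sub_left, hs.sub_right, hs.sub_right, hs.smul_left, hs.smul_right, hs.smul_left,
          hs.smul_right, hv, hs.conj_symm v y]
        module

theorem mul_smul_unit_eq (hm : IsQuaternionMul σ s v mul) (hs : IsHermitianForm σ s)
    (hv : s v v = 1) (hV : Module.finrank L V = 2) (x : V) (b : L) :
    mul x (b • v) = σ b • x + ((b - σ b) * s x v) • v := by
  rw [hm.mul_eq hs hv hV, hs.smul_left, hv, mul_one, hs.smul_right]
  module

theorem smul_mul_smul_eq (hm : IsQuaternionMul σ s v mul) (hs : IsHermitianForm σ s)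
    (hv : s v v = 1) (hV : Module.finrank L V = 2) (a b : L) (w : V) :
    mul (a • w) (b • w) = (s (b • w) v + σ (s (b • w) v)) • a • w - s (a • w) (b • w) • v := by
  rw [hm.mul_eq hs hv hV, hs.smul_left a w v, hs.smul_left b w v]
  module

end IsQuaternionMul

end Quaternion

section Lattice

variable {A K L V : Type*} [CommRing A] [Field K] [Field L] [Algebra K L] [Algebra A L]
  [AddCommGroup V] [Module L V] [Module A V] {σ : L ≃ₐ[K] L} {s : V → V → L} {v : V}
  {Λ : Submodule A V}

namespace IsHermitianForm

theorem exists_add_conj_eq_algebraMap (hs : IsHermitianForm σ s)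
    (hint : ∀ x ∈ Λ, ∃ a : A, s x x = algebraMap A L a) {x y : V} (hx : x ∈ Λ) (hy : y ∈ Λ) :
    ∃ a : A, s x y + σ (s x y) = algebraMap A L a := by
  obtain ⟨a, ha⟩ := hint _ (Λ.add_mem hx hy)
  obtain ⟨b, hb⟩ := hint x hx
  obtain ⟨c, hc⟩ := hint y hy
  exact ⟨a - b - c, by rw [hs.add_conj_eq, ha, hb, hc, map_sub, map_sub]⟩

theorem isIntegral_of_smul_mem (hs : IsHermitianForm σ s)
    (hint : ∀ x ∈ Λ, ∃ a : A, s x x = algebraMap A L a) {a b : L} {w : V} (ha : a • w ∈ Λ)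
    (hb : b • w ∈ Λ) : IsIntegral A (s (a • w) (b • w)) := by
  obtain ⟨p, hp⟩ := hs.exists_add_conj_eq_algebraMap hint ha hb
  obtain ⟨q, hq⟩ := hint _ ha
  obtain ⟨r, hr⟩ := hint _ hb
  exact isIntegral_of_add_eq_of_mul_eq hp (by rw [hs.mul_conj_smul_smul, hq, hr, map_mul])

theorem isIntegral_of_smul_unit_mem (hs : IsHermitianForm σ s)
    (hint : ∀ x ∈ Λ, ∃ a : A, s x x = algebraMap A L a) (hv : s v v = 1) (hvΛ : v ∈ Λ) {l : L}
    (hl : l • v ∈ Λ) : IsIntegral A l := by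
  have := hs.isIntegral_of_smul_mem hint hl (show (1 : L) • v ∈ Λ by rwa [one_smul])
  rwa [hs.smul_left, hs.smul_right, map_one, one_mul, hv, mul_one] at this

end IsHermitianForm

namespace IsQuaternionMul

variable {mul : V → V → V}

theorem mul_smul_unit_mem [Algebra A K] [IsScalarTower A K L] (hm : IsQuaternionMul σ s v mul)
    (hs : IsHermitianForm σ s) (hv : s v v = 1) (hV : Module.finrank L V = 2)
    (hint : ∀ x ∈ Λ, ∃ a : A, s x x = algebraMap A L a)
    (hΛB : ∀ b ∈ integralClosure A L, ∀ x ∈ Λ, b • x ∈ Λ) (hvΛ : v ∈ Λ) {x : V} (hx : x ∈ Λ)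
    {b : L} (hb : b ∈ integralClosure A L) : mul x (b • v) ∈ Λ := by
  obtain ⟨p, hp⟩ := hs.exists_add_conj_eq_algebraMap hint hx hvΛ
  obtain ⟨q, hq⟩ := hs.exists_add_conj_eq_algebraMap hint hx (hΛB b hb v hvΛ)
  have hσb : σ b ∈ integralClosure A L := hb.map (σ.toAlgHom.restrictScalars A)
  have hcoeff : (b - σ b) * s x v = b * algebraMap A L p - algebraMap A L q := by
    rw [← hp, ← hq, ← hs.conj_symm (b • v) x, hs.smul_right, hs.smul_left, hs.conj_symm v x]
    ring
  rw [hm.mul_smul_unit_eq hs hv hV, hcoeff]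
  exact Λ.add_mem (hΛB _ hσb x hx)
    (hΛB _ (sub_mem (mul_mem hb isIntegral_algebraMap) isIntegral_algebraMap) v hvΛ)

theorem smul_mul_smul_mem (hm : IsQuaternionMul σ s v mul) (hs : IsHermitianForm σ s)
    (hv : s v v = 1) (hV : Module.finrank L V = 2)
    (hint : ∀ x ∈ Λ, ∃ a : A, s x x = algebraMap A L a)
    (hΛB : ∀ b ∈ integralClosure A L, ∀ x ∈ Λ, b • x ∈ Λ) (hvΛ : v ∈ Λ) {a b : L} {w : V}
    (ha : a • w ∈ Λ) (hb : b • w ∈ Λ) : mul (a • w) (b • w) ∈ Λ := by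
  obtain ⟨p, hp⟩ := hs.exists_add_conj_eq_algebraMap hint hb hvΛ
  rw [hm.smul_mul_smul_eq hs hv hV, hp]
  exact Λ.sub_mem (hΛB _ isIntegral_algebraMap _ ha)
    (hΛB _ (hs.isIntegral_of_smul_mem hint ha hb) v hvΛ)

end IsQuaternionMul

theorem IsHermitianForm.exists_forall_mem_eq_smul_add_smul [IsDedekindDomain A] [Algebra A K]
    [IsFractionRing A K] [IsScalarTower A K L] [FiniteDimensional K L] [Algebra.IsSeparable K L]
    [Module K V] [IsScalarTower K L V] [IsScalarTower A L V] (hs : IsHermitianForm σ s)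
    (hv : s v v = 1) (hV : Module.finrank L V = 2) (hnd : ∀ x, (∀ y, s x y = 0) → x = 0)
    (hint : ∀ x ∈ Λ, ∃ a : A, s x x = algebraMap A L a)
    (hΛB : ∀ b ∈ integralClosure A L, ∀ x ∈ Λ, b • x ∈ Λ) (hΛ : Λ.FG)
    (hspan : Submodule.span K (Λ : Set V) = ⊤) (hvΛ : v ∈ Λ) :
    ∃ w : V, ∀ u ∈ Λ, ∃ b c : L, b ∈ integralClosure A L ∧ c • w ∈ Λ ∧ b • v + c • w = u := by
  obtain ⟨w₀, hw₀, hw₀0⟩ := hs.exists_orthogonal_ne_zero hv hV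
  have hdecomp := hs.exists_smul_add_smul_eq hv hV hw₀ hw₀0
  have hw₀v : s w₀ v = 0 := hs.eq_zero_comm.1 hw₀
  have hcoord (u : V) (c : L) (hc : s u v • v + c • w₀ = u) : s u w₀ = c * s w₀ w₀ := by
    rw [← hc, hs.add_left, hs.smul_left, hs.smul_left, hw₀, mul_zero, zero_add]
  have hanis : s w₀ w₀ ≠ 0 := fun h0 => hw₀0 <| hnd w₀ fun y => by
    obtain ⟨c, hc⟩ := hdecomp y
    rw [hs.eq_zero_comm, hcoord y c hc, h0, mul_zero]
  let χ := hs.toLinearMap w₀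
  have hχ : ∃ u ∈ Λ, χ u ≠ 0 := by
    by_contra! h
    have : χ.restrictScalars K = 0 := LinearMap.ext_on hspan h
    exact hanis (LinearMap.congr_fun this w₀)
  obtain ⟨w, hw1, hwΛ⟩ := exists_eq_one_forall_smul_mem_of_integralClosure K hΛB hΛ χ hχ
  refine ⟨w, fun u hu => ?_⟩
  have hχu : χ (u - χ u • w) = 0 := by
    rw [map_sub, map_smul, hw1, smul_eq_mul, mul_one, sub_self]
  have hker : s (u - χ u • w) v • v = u - χ u • w := by
    obtain ⟨c, hc⟩ := hdecomp (u - χ u • w)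
    have hc0 : c = 0 := (mul_eq_zero.1 (hcoord _ c hc ▸ hχu)).resolve_right hanis
    rwa [hc0, zero_smul, add_zero] at hc
  refine ⟨s (u - χ u • w) v, χ u, hs.isIntegral_of_smul_unit_mem hint hv hvΛ ?_, hwΛ u hu,
    by rw [hker, sub_add_cancel]⟩
  rw [hker]
  exact Λ.sub_mem hu (hwΛ u hu)

end Lattice
theorem statement7_general
    -- `A` a Dedekind domain with fraction field `K`
    (A : Type*) [CommRing A] [IsDedekindDomain A]
    (K : Type*) [Field K] [Algebra A K] [IsFractionRing A K]
    -- `L` a separable quadratic extension of `K`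
    (L : Type*) [Field L] [Algebra K L] [Algebra A L] [IsScalarTower A K L]
    [Algebra.IsSeparable K L] (hL : Module.finrank K L = 2)
    (σ : L ≃ₐ[K] L)
    -- `V = Λ ⊗ K`, a binary hermitian space
    (V : Type*) [AddCommGroup V] [Module A V] [Module K V] [Module L V]
    [IsScalarTower A K V] [IsScalarTower K L V] (hV : Module.finrank L V = 2)
    (s : V → V → L) (h : V → K)
    (hadd : ∀ x x' y : V, s (x + x') y = s x y + s x' y)
    (hlin : ∀ (l : L) (x y : V), s (l • x) y = l * s x y)
    (hsymm : ∀ x y : V, s x y = σ (s y x))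
    (hdiag : ∀ x : V, s x x = algebraMap K L (h x))
    (hnd : ∀ x : V, (∀ y : V, s x y = 0) → x = 0)
    (v : V) (hv : h v = 1)
    -- `mul` is the multiplication of the quaternion algebra `H_V` with
    -- identity `v` and reduced norm `h`
    (mul : V → V → V)
    (hmadd : ∀ x x' y : V, mul (x + x') y = mul x y + mul x' y)
    (hmadd' : ∀ x y y' : V, mul x (y + y') = mul x y + mul x y')
    (hml : ∀ (l : L) (x : V), mul (l • v) x = l • x)
    (hmlin : ∀ (l : L) (x y : V), mul (l • x) y = l • mul x y)
    (hmr : ∀ y : V, s v y = 0 → ∀ l : L, mul y (l • v) = σ l • y)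
    (hsq : ∀ y : V, s v y = 0 → mul y y = -(algebraMap K L (h y)) • v)
    (hassoc : ∀ x y z : V, mul (mul x y) z = mul x (mul y z))
    -- `Λ` is a lattice in `V` which is a module over `B`, the integral
    -- closure of `A` in `L`, on which `h` is integral, with `v ∈ Λ`
    (Λ : Submodule A V)
    (hΛB : ∀ b : L, b ∈ integralClosure A L → ∀ x ∈ Λ, b • x ∈ Λ)
    (hfg : Λ.FG) (hspan : Submodule.span K (Λ : Set V) = ⊤)
    (hint : ∀ x ∈ Λ, ∃ a : A, algebraMap K L (h x) = algebraMap A L a)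
    (hvΛ : v ∈ Λ) :
    ∀ x ∈ Λ, ∀ y ∈ Λ, mul x y ∈ Λ := by
  have : FiniteDimensional K L := Module.finite_of_finrank_eq_succ hL
  have : IsScalarTower A L V := .of_algebraMap_smul fun a x => by
    rw [IsScalarTower.algebraMap_apply A K L, algebraMap_smul, algebraMap_smul]
  have hs : IsHermitianForm σ s := ⟨hadd, hlin, hsymm⟩
  have hm : IsQuaternionMul σ s v mul :=
    ⟨hmadd, hmadd', hml, hmlin, hmr, fun y hy => by rw [hsq y hy, hdiag], hassoc⟩
  have hv' : s v v = 1 := by rw [hdiag, hv, map_one]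
  have hint' : ∀ x ∈ Λ, ∃ a : A, s x x = algebraMap A L a := by simpa only [hdiag] using hint
  obtain ⟨w, hw⟩ := hs.exists_forall_mem_eq_smul_add_smul hv' hV hnd hint' hΛB hfg hspan hvΛ
  intro x hx y hy
  obtain ⟨b₁, c₁, hb₁, hc₁, rfl⟩ := hw x hx
  obtain ⟨b₂, c₂, hb₂, hc₂, rfl⟩ := hw y hy
  rw [hm.add_left, hm.smul_unit_mul, hm.add_right]
  exact Λ.add_mem (hΛB b₁ hb₁ _ hy) <| Λ.add_mem
    (hm.mul_smul_unit_mem hs hv' hV hint' hΛB hvΛ hc₁ hb₂)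
    (hm.smul_mul_smul_mem hs hv' hV hint' hΛB hvΛ hc₁ hc₂)

/-- a pointed integral binary hermitian `B`-module `(Λ, v, h)`,
viewed inside the quaternion algebra `H_V` (`V = Λ ⊗ K`) with identity `v`, is
closed under multiplication, i.e. `Λ` is an order in `H_V`. -/
theorem statement7
    -- `A` a Dedekind domain with fraction field `K`
    (A : Type*) [CommRing A] [IsDedekindDomain A]
    (K : Type*) [Field K] [Algebra A K] [IsFractionRing A K]
    -- `L` a separable quadratic extension of `K`
    (L : Type*) [Field L] [Algebra K L] [Algebra A L] [IsScalarTower A K L]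
    [Algebra.IsSeparable K L] (hL : Module.finrank K L = 2)
    (σ : L ≃ₐ[K] L) (hσinv : ∀ l, σ (σ l) = l) (hσne : σ ≠ AlgEquiv.refl)
    -- `V = Λ ⊗ K`, a binary hermitian space
    (V : Type*) [AddCommGroup V] [Module A V] [Module K V] [Module L V]
    [IsScalarTower A K V] [IsScalarTower K L V] (hV : Module.finrank L V = 2)
    (s : V → V → L) (h : V → K)
    (hadd : ∀ x x' y : V, s (x + x') y = s x y + s x' y)
    (hlin : ∀ (l : L) (x y : V), s (l • x) y = l * s x y)
    (hsymm : ∀ x y : V, s x y = σ (s y x))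
    (hdiag : ∀ x : V, s x x = algebraMap K L (h x))
    (hnd : ∀ x : V, (∀ y : V, s x y = 0) → x = 0)
    (v : V) (hv : h v = 1)
    -- `mul` is the multiplication of the quaternion algebra `H_V` with
    -- identity `v` and reduced norm `h`
    (mul : V → V → V)
    (hmadd : ∀ x x' y : V, mul (x + x') y = mul x y + mul x' y)
    (hmadd' : ∀ x y y' : V, mul x (y + y') = mul x y + mul x y')
    (hml : ∀ (l : L) (x : V), mul (l • v) x = l • x)
    (hmlin : ∀ (l : L) (x y : V), mul (l • x) y = l • mul x y)
    (hmr : ∀ y : V, s v y = 0 → ∀ l : L, mul y (l • v) = σ l • y)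
    (hsq : ∀ y : V, s v y = 0 → mul y y = -(algebraMap K L (h y)) • v)
    (hassoc : ∀ x y z : V, mul (mul x y) z = mul x (mul y z))
    (hone : ∀ x : V, mul v x = x ∧ mul x v = x)
    -- `Λ` is a lattice in `V` which is a module over `B`, the integral
    -- closure of `A` in `L`, on which `h` is integral, with `v ∈ Λ`
    (Λ : Submodule A V)
    (hΛB : ∀ b : L, b ∈ integralClosure A L → ∀ x ∈ Λ, b • x ∈ Λ)
    (hfg : Λ.FG) (hspan : Submodule.span K (Λ : Set V) = ⊤)
    (hint : ∀ x ∈ Λ, ∃ a : A, algebraMap K L (h x) = algebraMap A L a)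
    (hvΛ : v ∈ Λ) :
    ∀ x ∈ Λ, ∀ y ∈ Λ, mul x y ∈ Λ :=
  statement7_general A K L hL σ V hV s h hadd hlin hsymm hdiag hnd v hv mul hmadd hmadd' hml hmlin
    hmr hsq hassoc Λ hΛB hfg hspan hint hvΛ
end

section
/- Let $B$ be a principal ideal domain (integral closure of $A$ in $L$), $\Lambda$ a free $B$-module of rank 2 with basis $(v, w)$ where $h(v) = 1$, and $s$ the associated hermitian symmetric form. Set $\gamma = s(w,v)$ and $v^\perp = w - s(w,v)v$. Then in the quaternion algebra $H_V$ with identity $v$, one has $w \cdot w = (\theta - n_L(\gamma))v + \mathrm{tr}_L(\gamma)w$ where $\theta = -h(v^\perp)$; moreover $\theta - n_L(\gamma) = -h(w) \in A$ and $\mathrm{tr}_L(\gamma) = h(v+w) - h(v) - h(w) \in A$ when $h$ is integral on $\Lambda$. -/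
/-- in the quaternion algebra `H_V` with identity `v`, for a
basis `(v, w)` of the `B`-lattice `Λ` with `h v = 1`, setting `γ = s w v` and
`v⊥ = w - γ v`, `θ = -h(v⊥)`, one has
`w ⬝ w = (θ - n_L γ) v + tr_L γ • w`, with `θ - n_L γ = -h w` and
`tr_L γ = h (v + w) - h v - h w`, both integral when `h` is integral on `Λ`. -/
theorem statement8
    (A : Type*) [CommRing A] [IsPrincipalIdealRing A] [IsDomain A]
    (K : Type*) [Field K] [Algebra A K] [IsFractionRing A K]
    (L : Type*) [Field L] [Algebra K L] [Algebra A L] [IsScalarTower A K L]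
    [Algebra.IsSeparable K L] (hL : Module.finrank K L = 2)
    (σ : L ≃ₐ[K] L) (hσinv : ∀ l, σ (σ l) = l) (hσne : σ ≠ AlgEquiv.refl)
    (V : Type*) [AddCommGroup V] [Module A V] [Module K V] [Module L V]
    [IsScalarTower A K V] [IsScalarTower K L V] (hV : Module.finrank L V = 2)
    (s : V → V → L) (h : V → K)
    (hadd : ∀ x x' y : V, s (x + x') y = s x y + s x' y)
    (hlin : ∀ (l : L) (x y : V), s (l • x) y = l * s x y)
    (hsymm : ∀ x y : V, s x y = σ (s y x))
    (hdiag : ∀ x : V, s x x = algebraMap K L (h x))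
    (hnd : ∀ x : V, (∀ y : V, s x y = 0) → x = 0)
    (v : V) (hv : h v = 1)
    (mul : V → V → V)
    (hmadd : ∀ x x' y : V, mul (x + x') y = mul x y + mul x' y)
    (hmadd' : ∀ x y y' : V, mul x (y + y') = mul x y + mul x y')
    (hml : ∀ (l : L) (x : V), mul (l • v) x = l • x)
    (hmlin : ∀ (l : L) (x y : V), mul (l • x) y = l • mul x y)
    (hmr : ∀ y : V, s v y = 0 → ∀ l : L, mul y (l • v) = σ l • y)
    (hsq : ∀ y : V, s v y = 0 → mul y y = -(algebraMap K L (h y)) • v)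
    (hassoc : ∀ x y z : V, mul (mul x y) z = mul x (mul y z))
    (hone : ∀ x : V, mul v x = x ∧ mul x v = x)
    -- `Λ` is the free `B`-lattice with basis `(v, w)`, on which `h` is integral
    (w : V) (Λ : Submodule A V)
    (hΛ : ∀ x ∈ Λ, ∃ b c : L, b ∈ integralClosure A L ∧
      c ∈ integralClosure A L ∧ x = b • v + c • w)
    (hvΛ : v ∈ Λ) (hwΛ : w ∈ Λ)
    (hint : ∀ x ∈ Λ, ∃ a : A, algebraMap K L (h x) = algebraMap A L a) :
    mul w w =
      (algebraMap K L (-(h (w - s w v • v))) - s w v * σ (s w v)) • v +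
        (s w v + σ (s w v)) • w ∧
    algebraMap K L (-(h (w - s w v • v))) - s w v * σ (s w v)
      = algebraMap K L (-(h w)) ∧
    s w v + σ (s w v) = algebraMap K L (h (v + w) - h v - h w) ∧
    (∃ a : A, algebraMap A K a = -(h w)) ∧
    (∃ a : A, algebraMap A K a = h (v + w) - h v - h w) := by
  have hKL : Function.Injective (algebraMap K L) := (algebraMap K L).injective
  set γ := s w v with hγ
  set p := w - γ • v with hp
  -- auxiliary linearity facts
  have ssub : ∀ x y z : V, s (x - y) z = s x z - s y z := by
    intro x y z
    have h1 : s (x - y + y) z = s (x - y) z + s y z := hadd _ _ _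
    rw [sub_add_cancel] at h1
    exact eq_sub_of_add_eq h1.symm
  have sadd' : ∀ x y y' : V, s x (y + y') = s x y + s x y' := by
    intro x y y'
    rw [hsymm x (y + y'), hadd, map_add, ← hsymm, ← hsymm]
  have slin' : ∀ (l : L) (x y : V), s x (l • y) = σ l * s x y := by
    intro l x y
    rw [hsymm x (l • y), hlin, map_mul, ← hsymm]
  have ssub' : ∀ x y z : V, s x (y - z) = s x y - s x z := by
    intro x y z
    rw [hsymm x (y - z), ssub, map_sub, ← hsymm, ← hsymm]
  have hsvv : s v v = 1 := by rw [hdiag, hv, map_one]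
  have hpv : s p v = 0 := by
    rw [hp, ssub, hlin, hsvv, mul_one, sub_self]
  have hvp : s v p = 0 := by rw [hsymm v p, hpv, map_zero]
  -- key hermitian computations
  have hspp : algebraMap K L (h p) = algebraMap K L (h w) - σ γ * γ := by
    rw [← hdiag, ← hdiag]
    calc s p p = s w p - γ * s v p := by rw [hp, ssub, hlin]
      _ = s w p := by rw [hvp, mul_zero, sub_zero]
      _ = s w w - σ γ * s w v := by rw [hp, ssub', slin']
      _ = s w w - σ γ * γ := rfl
  have htr : γ + σ γ = algebraMap K L (h (v + w) - h v - h w) := by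
    rw [map_sub, map_sub, ← hdiag, ← hdiag, ← hdiag, hadd, sadd', sadd',
      hsymm v w, hsvv]
    ring
  -- the multiplication formula
  have hw_eq : w = p + γ • v := by rw [hp, sub_add_cancel]
  have hmul : mul w w =
      -(algebraMap K L (h p)) • v + σ γ • p + (γ • p + γ • (γ • v)) := by
    conv_lhs => rw [hw_eq]
    rw [hmadd, hmadd', hmadd', hsq p hvp, hmr p hvp γ, hml γ p, hml γ (γ • v)]
  refine ⟨?_, ?_, htr, ?_, ?_⟩
  · rw [hmul, map_neg]
    rw [show w = p + γ • v from hw_eq]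
    module
  · rw [map_neg, map_neg, hspp]
    ring
  · obtain ⟨a, ha⟩ := hint w hwΛ
    rw [IsScalarTower.algebraMap_apply A K L] at ha
    exact ⟨-a, by rw [map_neg, ← hKL ha.symm]⟩
  · obtain ⟨a, ha⟩ := hint w hwΛ
    obtain ⟨a', ha'⟩ := hint (v + w) (Λ.add_mem hvΛ hwΛ)
    rw [IsScalarTower.algebraMap_apply A K L] at ha ha'
    refine ⟨a' - 1 - a, ?_⟩
    rw [map_sub, map_sub, map_one, ← hKL ha.symm, ← hKL ha'.symm, hv]
end

section
/- Let $H = L + Lu$ with $u^2 = \theta \in K^\times$, $ul = \bar{l}u$, $B = A[\pi]$ where $\pi$ satisfies $x^2 + ax + b = 0$ over $A$, and $\Lambda = B + Bu$. Then with respect to the $A$-basis $(1, \pi, u, \pi u)$, the determinant of the matrix of reduced traces $(\mathrm{tr}(u_i u_j))$ equals $-(a^2 - 4b)^2 \theta^2$. -/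
/-- for `H = L + Lu`, `u² = θ`, `u l = conj l * u`,
`B = A[π]` with `π² + aπ + b = 0`, and `Λ = B + Bu`, the determinant of the
matrix of reduced traces in the basis `(1, π, u, πu)` equals
`-(a² - 4b)² θ²`. -/
theorem statement11
    (A : Type*) [CommRing A] [IsDedekindDomain A]
    (K : Type*) [Field K] [Algebra A K] [IsFractionRing A K]
    (H : Type*) [Ring H] [Algebra K H]
    [Algebra.IsCentral K H] [IsSimpleRing H] (hH : Module.finrank K H = 4)
    -- the reduced trace of `H`
    (tr : H → K)
    (htradd : ∀ x y : H, tr (x + y) = tr x + tr y)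
    (htrsmul : ∀ (c : K) (x : H), tr (algebraMap K H c * x) = c * tr x)
    (htrone : tr 1 = 2)
    (hchar : ∀ x : H, ∃ c : K,
      x ^ 2 - algebraMap K H (tr x) * x = algebraMap K H c)
    -- the presentation `H = L + Lu`, `L = K[π]`, `π² + aπ + b = 0` over `A`
    (a b : A) (π u : H) (θ : K) (hθ : θ ≠ 0)
    (hπ : π ^ 2 + algebraMap K H (algebraMap A K a) * π
      + algebraMap K H (algebraMap A K b) = 0)
    (hu2 : u ^ 2 = algebraMap K H θ)
    (huπ : u * π = (-(algebraMap K H (algebraMap A K a)) - π) * u)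
    (hbasis : LinearIndependent K ![(1 : H), π, u, π * u]) :
    Matrix.det (Matrix.of fun i j : Fin 4 =>
        tr (![(1 : H), π, u, π * u] i * ![(1 : H), π, u, π * u] j))
      = -((algebraMap A K a) ^ 2 - 4 * algebraMap A K b) ^ 2 * θ ^ 2 := by
  set α := algebraMap A K a with hα
  set β := algebraMap A K b with hβ
  set f := algebraMap K H with hf
  -- linear independence helper
  have key : ∀ c : Fin 4 → K,
      c 0 • (1 : H) + c 1 • π + c 2 • u + c 3 • (π * u) = 0 → ∀ i, c i = 0 := by
    intro c hc i
    apply Fintype.linearIndependent_iff.mp hbasis c _ i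
    rw [Fin.sum_univ_four]
    simpa using hc
  -- basic trace lemmas
  have htr0 : tr 0 = 0 := by
    have h := htradd 0 0
    rw [add_zero] at h
    exact (left_eq_add.mp h)
  have htrneg : ∀ x : H, tr (-x) = -tr x := by
    intro x
    have h := htradd x (-x)
    rw [add_neg_cancel, htr0] at h
    exact eq_neg_of_add_eq_zero_right h.symm
  have htrc : ∀ c : K, tr (f c) = 2 * c := by
    intro c
    have h := htrsmul c 1
    rw [mul_one] at h
    rw [h, htrone]; ring
  have hπ2 : π ^ 2 = -(f α) * π - f β := by
    linear_combination (norm := noncomm_ring) hπ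
  have hπfα : π * f α = f α * π := (Algebra.commutes _ _).symm
  have hπfθ : π * f θ = f θ * π := (Algebra.commutes _ _).symm
  -- tr π = -α
  have htrπ : tr π = -α := by
    obtain ⟨c, hc⟩ := hchar π
    have hz : (-(β + c)) • (1 : H) + (-(α + tr π)) • π + (0 : K) • u
        + (0 : K) • (π * u) = 0 := by
      simp only [zero_smul, add_zero, Algebra.smul_def, map_neg, map_add, map_zero, zero_mul, ← hf]
      linear_combination (norm := noncomm_ring) hc - hπ
    have h := key ![-(β + c), -(α + tr π), 0, 0] (by simpa using hz) 1
    simp at h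
    linear_combination -h
  -- tr u = 0
  have htru : tr u = 0 := by
    obtain ⟨c, hc⟩ := hchar u
    have hz : (θ - c) • (1 : H) + (0 : K) • π + (-(tr u)) • u
        + (0 : K) • (π * u) = 0 := by
      simp only [zero_smul, add_zero, zero_add, Algebra.smul_def, map_sub,
        map_neg, map_zero, zero_mul, ← hf]
      linear_combination (norm := noncomm_ring) hc - hu2
    have h := key ![θ - c, 0, -(tr u), 0] (by simpa using hz) 2
    simpa using h
  -- (πu)² = f (βθ)
  have hsq : (π * u) ^ 2 = f (β * θ) := by
    have h1 : (π * u) ^ 2 = π * (u * π) * u := by noncomm_ring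
    rw [h1, huπ]
    have h2 : π * ((-(f α) - π) * u) * u = (π * (-(f α)) - π ^ 2) * u ^ 2 := by
      noncomm_ring
    rw [h2, hπ2, mul_neg, hπfα, hu2, map_mul]
    noncomm_ring
  -- tr (πu) = 0
  have htrπu : tr (π * u) = 0 := by
    obtain ⟨c, hc⟩ := hchar (π * u)
    have hz : (β * θ - c) • (1 : H) + (0 : K) • π + (0 : K) • u
        + (-(tr (π * u))) • (π * u) = 0 := by
      simp only [zero_smul, add_zero, zero_add, Algebra.smul_def, map_sub,
        map_neg, map_zero, zero_mul, ← hf]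
      linear_combination (norm := noncomm_ring) hc - hsq
    have h := key ![β * θ - c, 0, 0, -(tr (π * u))] (by simpa using hz) 3
    simpa using h
  have htrcomb : ∀ (c d : K) (x y : H),
      tr (f c * x + f d * y) = c * tr x + d * tr y := by
    intro c d x y
    rw [htradd, htrsmul, htrsmul]
  -- the 16 entries
  have e00 : tr ((1 : H) * 1) = 2 := by rw [one_mul, htrone]
  have e01 : tr ((1 : H) * π) = -α := by rw [one_mul, htrπ]
  have e02 : tr ((1 : H) * u) = 0 := by rw [one_mul, htru]
  have e03 : tr ((1 : H) * (π * u)) = 0 := by rw [one_mul, htrπu]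
  have e10 : tr (π * 1) = -α := by rw [mul_one, htrπ]
  have e11 : tr (π * π) = α ^ 2 - 2 * β := by
    have h : π * π = f (-α) * π + f (-β) * 1 := by
      simp only [map_neg]
      linear_combination (norm := noncomm_ring) hπ2
    rw [h, htrcomb, htrπ, htrone]; ring
  have e12 : tr (π * u) = 0 := htrπu
  have e13 : tr (π * (π * u)) = 0 := by
    have h : π * (π * u) = f (-α) * (π * u) + f (-β) * u := by
      simp only [map_neg]
      linear_combination (norm := noncomm_ring) hπ2 * u
    rw [h, htrcomb, htrπu, htru]; ring
  have e20 : tr (u * 1) = 0 := by rw [mul_one, htru]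
  have e21 : tr (u * π) = 0 := by
    have h : u * π = f (-α) * u + f (-1) * (π * u) := by
      simp only [map_neg, map_one]
      linear_combination (norm := noncomm_ring) huπ
    rw [h, htrcomb, htru, htrπu]; ring
  have e22 : tr (u * u) = 2 * θ := by
    have h : u * u = f θ := by rw [← hu2]; noncomm_ring
    rw [h, htrc]
  have e23 : tr (u * (π * u)) = -α * θ := by
    have h : u * (π * u) = f (-(α * θ)) * 1 + f (-θ) * π := by
      have h1 : u * (π * u) = (u * π) * u := by noncomm_ring
      have h2 : u * u = f θ := by rw [← hu2]; noncomm_ring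
      rw [h1, huπ, mul_assoc, h2]
      simp only [map_neg, map_mul]
      linear_combination (norm := noncomm_ring) -hπfθ
    rw [h, htrcomb, htrone, htrπ]; ring
  have e30 : tr (π * u * 1) = 0 := by rw [mul_one, htrπu]
  have e31 : tr (π * u * π) = 0 := by
    have h : π * u * π = f β * u := by
      rw [mul_assoc, huπ]
      have h2 : π * ((-(f α) - π) * u) = (π * (-(f α)) - π ^ 2) * u := by
        noncomm_ring
      rw [h2, hπ2, mul_neg, hπfα]
      noncomm_ring
    rw [h, htrsmul, htru]; ring
  have e32 : tr (π * u * u) = -α * θ := by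
    have h : π * u * u = f θ * π := by
      have h2 : u * u = f θ := by rw [← hu2]; noncomm_ring
      rw [mul_assoc, h2, hπfθ]
    rw [h, htrsmul, htrπ]; ring
  have e33 : tr (π * u * (π * u)) = 2 * (β * θ) := by
    have h : π * u * (π * u) = f (β * θ) := by rw [← hsq]; noncomm_ring
    rw [h, htrc]
  -- explicit matrix
  have hM : (Matrix.of fun i j : Fin 4 =>
        tr (![(1 : H), π, u, π * u] i * ![(1 : H), π, u, π * u] j))
      = !![2, -α, 0, 0; -α, α ^ 2 - 2 * β, 0, 0;
           0, 0, 2 * θ, -α * θ; 0, 0, -α * θ, 2 * (β * θ)] := by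
    ext i j
    fin_cases i <;> fin_cases j <;>
      simp only [Matrix.of_apply, Matrix.cons_val', Matrix.cons_val_zero,
        Matrix.cons_val_one, Matrix.head_cons, Matrix.empty_val',
        Matrix.cons_val_fin_one, Matrix.head_fin_const, Fin.isValue,
        Matrix.cons_val_two, Matrix.tail_cons, Matrix.cons_val_three] <;>
      first
        | exact e00 | exact e01 | exact e02 | exact e03
        | exact e10 | exact e11 | exact e12 | exact e13
        | exact e20 | exact e21 | exact e22 | exact e23
        | exact e30 | exact e31 | exact e32 | exact e33
  rw [hM]
  simp [Matrix.det_succ_row_zero, Fin.sum_univ_succ, Fin.succAbove,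
    Matrix.det_fin_three]
  ring
end

section
/- Let $A$ be a Dedekind domain with fraction field $K$, $B$ the integral closure of $A$ in a separable quadratic extension $L$, $\Lambda$ a projective $B$-module of rank 2, and $h$ an integral hermitian form on $\Lambda$ (i.e., $h(\Lambda) \subseteq A$). Then $D_{B/A} \cdot d(\Lambda, h)$ is an integral ideal of $A$, where $d(\Lambda, h)$ is the fractional ideal generated by $\det(s(v_i, v_j))$ over pairs of elements of $\Lambda$, and $s$ is the hermitian symmetric form with $s(x,x) = h(x)$. -/
/-!
Write `σ` for the non-trivial automorphism of `L/K`, so that `Tr x = x + σ x`, and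
`t = s(v₁, v₂)`, so that `s(v₂, v₁) = σ t`. For `c ∈ B²` put `δ = c₀ σc₁ - c₁ σc₀`; then
`det (Tr (cₖ cₘ)) = δ²`, which lies in `A` as `σ δ = -δ`. Polarising `h` along `v₂ + b v₁`
with `b ∈ B` shows `b t + σb σt ∈ A`, since `b σb ∈ A`. So `aᵢ = cᵢ t + σcᵢ σt ∈ A`, and
`E = c₀ a₁ - c₁ a₀ = δ σt` has norm `E σE = -δ² t σt`. Hence
`δ² (h(v₁) h(v₂) - t σt) = δ² h(v₁) h(v₂) + E σE` lies in `A`.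
-/

open Module

namespace AlgEquiv

variable {K L : Type*} [Field K] [Field L] [Algebra K L] [FiniteDimensional K L]
  {σ : L ≃ₐ[K] L}

theorem nat_card_eq_two_of_finrank_eq_two (hL : finrank K L = 2) (hσ : σ ≠ refl) :
    Nat.card (L ≃ₐ[K] L) = 2 := by
  have hlt : 1 < Nat.card (L ≃ₐ[K] L) :=
    Finite.one_lt_card_iff_nontrivial.2 ⟨⟨σ, refl, hσ⟩⟩
  have hle : Nat.card (L ≃ₐ[K] L) ≤ 2 :=
    (Nat.card_congr (algEquivEquivAlgHom K L).toEquiv).trans_le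
      (hL ▸ card_algHom_le_finrank K L L)
  omega

theorem isGalois_of_finrank_eq_two (hL : finrank K L = 2) (hσ : σ ≠ refl) : IsGalois K L :=
  IsGalois.of_card_aut_eq_finrank K L ((nat_card_eq_two_of_finrank_eq_two hL hσ).trans hL.symm)

theorem univ_eq_pair_of_finrank_eq_two [Fintype (L ≃ₐ[K] L)] [DecidableEq (L ≃ₐ[K] L)]
    (hL : finrank K L = 2) (hσ : σ ≠ refl) : (Finset.univ : Finset (L ≃ₐ[K] L)) = {refl, σ} := by
  refine (Finset.eq_of_subset_of_card_le (Finset.subset_univ _) ?_).symm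
  rw [Finset.card_univ, ← Nat.card_eq_fintype_card, nat_card_eq_two_of_finrank_eq_two hL hσ,
    Finset.card_pair (Ne.symm hσ)]

theorem algebraMap_trace_eq_add_of_finrank_eq_two (hL : finrank K L = 2) (hσ : σ ≠ refl)
    (x : L) : algebraMap K L (Algebra.trace K L x) = x + σ x := by
  classical
  have := isGalois_of_finrank_eq_two hL hσ
  rw [trace_eq_sum_automorphisms, univ_eq_pair_of_finrank_eq_two hL hσ,
    Finset.sum_pair (Ne.symm hσ)]
  rfl

theorem mem_range_algebraMap_of_apply_eq_self (hL : finrank K L = 2) (hσ : σ ≠ refl)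
    {x : L} (hx : σ x = x) : x ∈ Set.range (algebraMap K L) := by
  classical
  have := isGalois_of_finrank_eq_two hL hσ
  refine (IsGalois.mem_range_algebraMap_iff_fixed x).2 fun τ => ?_
  have hτ : τ ∈ (Finset.univ : Finset (L ≃ₐ[K] L)) := Finset.mem_univ τ
  rw [univ_eq_pair_of_finrank_eq_two hL hσ, Finset.mem_insert, Finset.mem_singleton] at hτ
  rcases hτ with rfl | rfl
  · rfl
  · exact hx

theorem algebraMap_det_trace_mul_eq_sq (hL : finrank K L = 2) (hσ : σ ≠ refl) (c : Fin 2 → L) :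
    algebraMap K L (Matrix.of fun k m => Algebra.trace K L (c k * c m)).det =
      (c 0 * σ (c 1) - c 1 * σ (c 0)) ^ 2 := by
  simp only [Matrix.det_fin_two, Matrix.of_apply, map_sub, map_mul,
    algebraMap_trace_eq_add_of_finrank_eq_two hL hσ]
  ring

end AlgEquiv

section Integral

variable {A K L : Type*} [CommRing A] [IsIntegrallyClosed A] [Field K] [Field L]
  [Algebra A K] [IsFractionRing A K] [Algebra K L] [Algebra A L] [IsScalarTower A K L]
  [FiniteDimensional K L] {σ : L ≃ₐ[K] L}

theorem mem_bot_of_isIntegral_of_apply_eq_self (hL : finrank K L = 2) (hσ : σ ≠ .refl) {x : L}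
    (hx : IsIntegral A x) (hσx : σ x = x) : x ∈ (⊥ : Subalgebra A L) := by
  obtain ⟨k, rfl⟩ := AlgEquiv.mem_range_algebraMap_of_apply_eq_self hL hσ hσx
  obtain ⟨a, rfl⟩ := IsIntegrallyClosed.isIntegral_iff.mp
    ((isIntegral_algebraMap_iff (algebraMap K L).injective).mp hx)
  exact Algebra.mem_bot.2 ⟨a, IsScalarTower.algebraMap_apply A K L a⟩

theorem mul_apply_mem_bot (hL : finrank K L = 2) (hσ : σ ≠ .refl) (hσinv : ∀ l, σ (σ l) = l)
    {x : L} (hx : IsIntegral A x) : x * σ x ∈ (⊥ : Subalgebra A L) :=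
  mem_bot_of_isIntegral_of_apply_eq_self hL hσ
    (hx.mul (hx.map ((σ : L →ₐ[K] L).restrictScalars A))) (by rw [map_mul, hσinv, mul_comm])

section Hermitian

variable {Λ : Type*} [AddCommGroup Λ] [Module (integralClosure A L) Λ] {s : Λ → Λ → L}

theorem mul_add_apply_mul_mem_bot (hL : finrank K L = 2) (hσ : σ ≠ .refl)
    (hσinv : ∀ l, σ (σ l) = l) (hadd : ∀ x x' y : Λ, s (x + x') y = s x y + s x' y)
    (hlin : ∀ (b : integralClosure A L) (x y : Λ), s (b • x) y = (b : L) * s x y)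
    (hsymm : ∀ x y : Λ, s x y = σ (s y x)) (hint : ∀ x : Λ, s x x ∈ (⊥ : Subalgebra A L))
    (b : integralClosure A L) (v w : Λ) :
    (b : L) * s v w + σ b * s w v ∈ (⊥ : Subalgebra A L) := by
  have hexp : s (w + b • v) (w + b • v) =
      s w w + ((b : L) * s v w + σ b * s w v) + (b : L) * σ b * s v v := by
    rw [hadd, hlin, hsymm w, hsymm v, hadd, hadd, hlin, hlin]
    simp only [map_add, map_mul, ← hsymm]
    ring
  have hnorm := mul_apply_mem_bot hL hσ hσinv b.2
  convert sub_mem (sub_mem (hint (w + b • v)) (hint w)) (mul_mem hnorm (hint v)) using 1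
  rw [hexp]
  ring

theorem sq_mul_det_mem_bot (hL : finrank K L = 2) (hσ : σ ≠ .refl)
    (hσinv : ∀ l, σ (σ l) = l) (hadd : ∀ x x' y : Λ, s (x + x') y = s x y + s x' y)
    (hlin : ∀ (b : integralClosure A L) (x y : Λ), s (b • x) y = (b : L) * s x y)
    (hsymm : ∀ x y : Λ, s x y = σ (s y x)) (hint : ∀ x : Λ, s x x ∈ (⊥ : Subalgebra A L))
    {c : Fin 2 → L} (hc : ∀ k, c k ∈ integralClosure A L) (v₁ v₂ : Λ) :
    (c 0 * σ (c 1) - c 1 * σ (c 0)) ^ 2 * (s v₁ v₁ * s v₂ v₂ - s v₁ v₂ * s v₂ v₁) ∈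
      (⊥ : Subalgebra A L) := by
  set δ := c 0 * σ (c 1) - c 1 * σ (c 0)
  have hσc (k : Fin 2) : σ (c k) ∈ integralClosure A L :=
    (hc k).map ((σ : L →ₐ[K] L).restrictScalars A)
  have hσδ : σ δ = -δ := by
    simp only [δ, map_sub, map_mul, hσinv]
    ring
  have hδ : δ ^ 2 ∈ (⊥ : Subalgebra A L) :=
    mem_bot_of_isIntegral_of_apply_eq_self hL hσ
      (pow_mem (sub_mem (mul_mem (hc 0) (hσc 1)) (mul_mem (hc 1) (hσc 0))) 2)
      (by rw [map_pow, hσδ, neg_sq])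
  have ha (k : Fin 2) : c k * s v₁ v₂ + σ (c k) * s v₂ v₁ ∈ (⊥ : Subalgebra A L) :=
    mul_add_apply_mul_mem_bot hL hσ hσinv hadd hlin hsymm hint ⟨c k, hc k⟩ v₁ v₂
  set E :=
    c 0 * (c 1 * s v₁ v₂ + σ (c 1) * s v₂ v₁) - c 1 * (c 0 * s v₁ v₂ + σ (c 0) * s v₂ v₁)
  have hE : E = δ * s v₂ v₁ := by ring
  have hσE : σ E = -δ * s v₁ v₂ := by rw [hE, map_mul, hσδ, ← hsymm]
  have hbot : (⊥ : Subalgebra A L) ≤ integralClosure A L := bot_le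
  have hNE : E * σ E ∈ (⊥ : Subalgebra A L) :=
    mul_apply_mem_bot hL hσ hσinv
      (sub_mem (mul_mem (hc 0) (hbot (ha 1))) (mul_mem (hc 1) (hbot (ha 0))))
  convert add_mem (mul_mem hδ (mul_mem (hint v₁) (hint v₂))) hNE using 1
  rw [hσE, hE]
  ring

end Hermitian

end Integral

theorem statement14_general
    (A : Type*) [CommRing A] [IsDedekindDomain A]
    (K : Type*) [Field K] [Algebra A K] [IsFractionRing A K]
    (L : Type*) [Field L] [Algebra K L] [Algebra A L] [IsScalarTower A K L]
    (hL : Module.finrank K L = 2)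
    (σ : L ≃ₐ[K] L) (hσinv : ∀ l, σ (σ l) = l) (hσne : σ ≠ AlgEquiv.refl)
    (Λ : Type*) [AddCommGroup Λ] [Module (integralClosure A L) Λ]
    -- the hermitian symmetric form `s` of the integral hermitian form `h`
    (s : Λ → Λ → L)
    (hadd : ∀ x x' y : Λ, s (x + x') y = s x y + s x' y)
    (hlin : ∀ (b : integralClosure A L) (x y : Λ), s (b • x) y = (b : L) * s x y)
    (hsymm : ∀ x y : Λ, s x y = σ (s y x))
    (hint : ∀ x : Λ, ∃ a : A, s x x = algebraMap A L a) :
    (Submodule.span A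
        {x : L | ∃ c : Fin 2 → L, (∀ k, c k ∈ integralClosure A L) ∧
          x = algebraMap K L
            (Matrix.det (Matrix.of fun k m => Algebra.trace K L (c k * c m)))}) *
      (Submodule.span A
        {x : L | ∃ v₁ v₂ : Λ, x = s v₁ v₁ * s v₂ v₂ - s v₁ v₂ * s v₂ v₁})
      ≤ (1 : Submodule A L) := by
  have : FiniteDimensional K L := Module.finite_of_finrank_eq_succ hL
  have hint' (x : Λ) : s x x ∈ (⊥ : Subalgebra A L) :=
    let ⟨a, ha⟩ := hint x
    ha ▸ Subalgebra.algebraMap_mem ⊥ a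
  rw [Submodule.span_mul_span, Submodule.span_le, ← Algebra.toSubmodule_bot]
  rintro _ ⟨_, ⟨c, hc, rfl⟩, _, ⟨v₁, v₂, rfl⟩, rfl⟩
  rw [AlgEquiv.algebraMap_det_trace_mul_eq_sq hL hσne]
  exact sq_mul_det_mem_bot hL hσne hσinv hadd hlin hsymm hint' hc v₁ v₂

/-- for an integral hermitian form `h` (with hermitian symmetric
form `s`) on a projective rank-2 module `Λ` over `B`, the product
`D_{B/A} · d(Λ, h)` is an integral ideal of `A`; here `d(Λ, h)` is generated
by the determinants `det (s(vᵢ, vⱼ))` and `D_{B/A}` is the discriminant ideal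
of `B` over `A` (all viewed inside `L`). -/
theorem statement14
    (A : Type*) [CommRing A] [IsDedekindDomain A]
    (K : Type*) [Field K] [Algebra A K] [IsFractionRing A K]
    (L : Type*) [Field L] [Algebra K L] [Algebra A L] [IsScalarTower A K L]
    [Algebra.IsSeparable K L] (hL : Module.finrank K L = 2)
    (σ : L ≃ₐ[K] L) (hσinv : ∀ l, σ (σ l) = l) (hσne : σ ≠ AlgEquiv.refl)
    (Λ : Type*) [AddCommGroup Λ] [Module (integralClosure A L) Λ]
    [Module.Projective (integralClosure A L) Λ]
    [Module.Finite (integralClosure A L) Λ]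
    (hrk : Module.rank (integralClosure A L) Λ = 2)
    -- the hermitian symmetric form `s` of the integral hermitian form `h`
    (s : Λ → Λ → L)
    (hadd : ∀ x x' y : Λ, s (x + x') y = s x y + s x' y)
    (hlin : ∀ (b : integralClosure A L) (x y : Λ), s (b • x) y = (b : L) * s x y)
    (hsymm : ∀ x y : Λ, s x y = σ (s y x))
    (hint : ∀ x : Λ, ∃ a : A, s x x = algebraMap A L a) :
    (Submodule.span A
        {x : L | ∃ c : Fin 2 → L, (∀ k, c k ∈ integralClosure A L) ∧
          x = algebraMap K L
            (Matrix.det (Matrix.of fun k m => Algebra.trace K L (c k * c m)))}) *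
      (Submodule.span A
        {x : L | ∃ v₁ v₂ : Λ, x = s v₁ v₁ * s v₂ v₂ - s v₁ v₂ * s v₂ v₁})
      ≤ (1 : Submodule A L) :=
  statement14_general A K L hL σ hσinv hσne Λ s hadd hlin hsymm hint
end

section
/- Let $L$ be an imaginary quadratic field of odd discriminant $D$, $B = \mathcal{O}_L$, and $p$ an odd prime ramified in $L$. Write $B_p = \mathbb{Z}_p[\pi]$ with $\bar{\pi} = -\pi$ and $\pi\bar{\pi} = p$. Let $h$ be an integral binary $B$-hermitian form on a free $B_p$-module of rank 2 with matrix $\begin{pmatrix} \alpha & \gamma \\ \bar{\gamma} & \beta \end{pmatrix}$, $\alpha, \beta \in \mathbb{Z}_p$, $\gamma = (a + b\pi)/\pi$ with $a \in \mathbb{Z}_p^\times$, $b \in \mathbb{Z}_p$. Then the $4 \times 4$ matrix of $h$ as a quadratic form over $\mathbb{Z}_p$ in coordinates $x = x_1 + x_2\pi$, $y = y_1 + y_2\pi$ has determinant congruent to $a^4/16$ modulo $p$; in particular the determinant is a $p$-adic unit and $h$ is $\mathbb{Z}_p$-equivalent to a unimodular diagonal form, hence represents 1 over $\mathbb{Z}_p$.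 -/
/-!
Expanding the determinant gives `det M = a⁴/16 + p k`, a unit because `a` and `2` are units.
Over a local ring in which `2` is a unit, a symmetric matrix with unit determinant is congruent
to a diagonal matrix with unit entries: some vector has unit value (a basis vector `eᵢ`, or
`eᵢ + eⱼ` when every diagonal entry lies in the maximal ideal but `Mᵢⱼ` does not), and splitting
it off leaves a symmetric Schur complement with unit determinant, so induction applies. A
unimodular diagonal form in two or more variables represents `1`: `d₀ x² + d₁ y² = 1` is
solvable modulo `p` by Chevalley–Warning, and Hensel's lemma lifts the solution to `ℤ_p`.
-/

open Matrix IsLocalRing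

section Polynomial

open Polynomial

theorem HenselianRing.isSquare_of_sq_sub_mem {R : Type*} [CommRing R] {I : Ideal R}
    [HenselianRing R I] (h2 : IsUnit (2 : R)) {x u : R} (hx : IsUnit x) (h : x ^ 2 - u ∈ I) :
    IsSquare u := by
  have hderiv : (derivative (X ^ 2 - C u)).eval x = 2 * x := by simp; ring
  obtain ⟨y, hy, -⟩ := HenselianRing.is_henselian (X ^ 2 - C u)
    (monic_X_pow_sub_C u two_ne_zero) x (by simpa using h)
    (by rw [hderiv]; exact (h2.mul hx).map _)
  have hy' : y ^ 2 - u = 0 := by simpa using hy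
  exact ⟨y, by linear_combination -hy'⟩

theorem FiniteField.exists_mul_sq_add_mul_sq_eq_one {K : Type*} [Field K] [Finite K]
    (hK : ringChar K ≠ 2) {a b : K} (ha : a ≠ 0) (hb : b ≠ 0) :
    ∃ x y, a * x ^ 2 + b * y ^ 2 = 1 := by
  have := Fintype.ofFinite K
  have hbX : (C b * X ^ 2 : K[X]).degree = 2 := degree_C_mul_X_pow 2 hb
  obtain ⟨x, y, h⟩ := exists_root_sum_quadratic (g := C b * X ^ 2 - C 1)
    (degree_C_mul_X_pow 2 ha) (by rwa [degree_sub_C (by rw [hbX]; decide)])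
    (odd_card_of_char_ne_two hK)
  simp only [eval_sub, eval_mul, eval_C, eval_pow, eval_X] at h
  exact ⟨x, y, by linear_combination h⟩

end Polynomial

namespace IsLocalRing

variable {R : Type*} [CommRing R] [IsLocalRing R]

theorem isUnit_add_of_mem_maximalIdeal {u m : R} (hu : IsUnit u) (hm : m ∈ maximalIdeal R) :
    IsUnit (u + m) := by
  rwa [← residue_ne_zero_iff_isUnit, map_add, (residue_eq_zero_iff _).2 hm, add_zero,
    residue_ne_zero_iff_isUnit]

theorem exists_mul_sq_add_mul_sq_eq_one [HenselianRing R (maximalIdeal R)]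
    [Finite (ResidueField R)] (h2 : IsUnit (2 : R)) {a b : R} (ha : IsUnit a) (hb : IsUnit b) :
    ∃ x y, a * x ^ 2 + b * y ^ 2 = 1 := by
  have hK : ringChar (ResidueField R) ≠ 2 := by
    intro h
    apply (residue_ne_zero_iff_isUnit 2).2 h2
    rw [map_ofNat]
    simpa [h] using ringChar.Nat.cast_ringChar (R := ResidueField R)
  obtain ⟨x₀, y₀, h⟩ := FiniteField.exists_mul_sq_add_mul_sq_eq_one hK
    ((residue_ne_zero_iff_isUnit a).2 ha) ((residue_ne_zero_iff_isUnit b).2 hb)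
  wlog hx₀ : x₀ ≠ 0 generalizing a b x₀ y₀
  · have hy₀ : y₀ ≠ 0 := by rintro rfl; simp_all
    obtain ⟨y, x, hyx⟩ := this hb ha y₀ x₀ (by linear_combination h) hy₀
    exact ⟨x, y, by linear_combination hyx⟩
  obtain ⟨x, rfl⟩ := residue_surjective x₀
  obtain ⟨y, rfl⟩ := residue_surjective y₀
  obtain ⟨a', ha'⟩ := ha.exists_right_inv
  -- `a x` is a square root of `a (1 - b y²)` modulo the maximal ideal
  obtain ⟨r, hr⟩ := HenselianRing.isSquare_of_sq_sub_mem h2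
    (ha.mul ((residue_ne_zero_iff_isUnit x).1 hx₀)) (u := a * (1 - b * y ^ 2)) (by
      rw [← residue_eq_zero_iff]
      simp only [map_sub, map_mul, map_pow, map_one]
      linear_combination residue R a * h)
  exact ⟨a' * r, y, by
    linear_combination -(a * a' ^ 2) * hr + (a * a' + 1) * (1 - b * y ^ 2) * ha'⟩

end IsLocalRing

namespace Matrix

variable {R : Type*} [CommRing R] {m n : Type*} [Fintype m] [Fintype n]

theorem dotProduct_mulVec_mulVec_self (M U : Matrix n n R) (v : n → R) :
    (U *ᵥ v) ⬝ᵥ M *ᵥ (U *ᵥ v) = v ⬝ᵥ (Uᵀ * M * U) *ᵥ v := by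
  rw [Matrix.mul_assoc, ← mulVec_mulVec, dotProduct_mulVec v, vecMul_transpose, mulVec_mulVec]

theorem IsSymm.transpose_mul_mul {M : Matrix n n R} (hM : M.IsSymm) (V : Matrix n n R) :
    (Vᵀ * M * V).IsSymm := by
  simp [IsSymm, Matrix.mul_assoc, hM.eq]

variable [DecidableEq m] [DecidableEq n]

def IsCongrUnitDiagonal (M : Matrix n n R) : Prop :=
  ∃ (U : Matrix n n R) (d : n → R), IsUnit U.det ∧ (∀ i, IsUnit (d i)) ∧ Uᵀ * M * U = diagonal d

namespace IsCongrUnitDiagonal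

theorem of_transpose_mul_mul {M V : Matrix n n R} (hV : IsUnit V.det)
    (h : (Vᵀ * M * V).IsCongrUnitDiagonal) : M.IsCongrUnitDiagonal := by
  obtain ⟨U, d, hU, hd, hUd⟩ := h
  refine ⟨V * U, d, by simpa [det_mul] using hV.mul hU, hd, ?_⟩
  rw [← hUd, transpose_mul]
  simp only [Matrix.mul_assoc]

theorem of_submatrix {M : Matrix n n R} (e : m ≃ n)
    (h : (M.submatrix e e).IsCongrUnitDiagonal) : M.IsCongrUnitDiagonal := by
  obtain ⟨U, d, hU, hd, hUd⟩ := h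
  refine ⟨U.submatrix e.symm e.symm, d ∘ e.symm, by rwa [det_submatrix_equiv_self],
    fun i => hd _, ?_⟩
  have hM : M = (M.submatrix e e).submatrix e.symm e.symm := by simp
  rw [transpose_submatrix, hM, submatrix_mul_equiv, submatrix_mul_equiv, hUd,
    submatrix_diagonal_equiv]

theorem fromBlocks_zero {A : Matrix m m R} {D : Matrix n n R} (hA : A.IsCongrUnitDiagonal)
    (hD : D.IsCongrUnitDiagonal) : (fromBlocks A 0 0 D).IsCongrUnitDiagonal := by
  obtain ⟨U, d, hU, hd, hUd⟩ := hA
  obtain ⟨V, e, hV, he, hVe⟩ := hD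
  refine ⟨fromBlocks U 0 0 V, Sum.elim d e, by simpa using hU.mul hV,
    fun i => i.rec hd he, ?_⟩
  simp [fromBlocks_transpose, fromBlocks_multiply, hUd, hVe]

theorem of_subsingleton [Subsingleton n] {M : Matrix n n R} (hM : IsUnit M.det) :
    M.IsCongrUnitDiagonal := by
  have hdiag : M = diagonal fun i => M i i := by
    ext i j
    rw [Subsingleton.elim j i]
    simp
  refine ⟨1, fun i => M i i, by simp, fun i => ?_, by simpa using hdiag⟩
  rwa [hdiag, det_diagonal, Fintype.prod_subsingleton _ i] at hM

end IsCongrUnitDiagonal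

theorem IsSymm.exists_transpose_mul_mul_eq_fromBlocks {M : Matrix (m ⊕ n) (m ⊕ n) R}
    (hM : M.IsSymm) (hD : IsUnit M.toBlocks₂₂.det) :
    ∃ V : Matrix (m ⊕ n) (m ⊕ n) R, IsUnit V.det ∧ Vᵀ * M * V =
      Matrix.fromBlocks (M.toBlocks₁₁ - M.toBlocks₁₂ * M.toBlocks₂₂⁻¹ * M.toBlocks₂₁) 0 0
        M.toBlocks₂₂ := by
  let _ := invertibleOfIsUnitDet _ hD
  rw [← fromBlocks_toBlocks M, isSymm_fromBlocks_iff] at hM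
  obtain ⟨-, hB, -, hDsymm⟩ := hM
  set L : Matrix (m ⊕ n) (m ⊕ n) R := Matrix.fromBlocks 1 (M.toBlocks₁₂ * M.toBlocks₂₂⁻¹) 0 1
  have hL : IsUnit L.det := by simp [L]
  have hLT : Lᵀ = Matrix.fromBlocks 1 0 (M.toBlocks₂₂⁻¹ * M.toBlocks₂₁) 1 := by
    simp [L, fromBlocks_transpose, ← hB, transpose_nonsing_inv, hDsymm.eq]
  -- Schur's factorisation `M = L * fromBlocks S 0 0 D * Lᵀ`
  refine ⟨L⁻¹ᵀ, by simpa using hL, ?_⟩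
  conv_lhs => rw [← fromBlocks_toBlocks M, fromBlocks_eq_of_invertible₂₂, invOf_eq_nonsing_inv,
    ← hLT, transpose_transpose]
  rw [← Matrix.mul_assoc, ← Matrix.mul_assoc, nonsing_inv_mul _ hL, Matrix.one_mul,
    Matrix.mul_assoc, ← transpose_mul, nonsing_inv_mul _ hL, transpose_one, Matrix.mul_one]

section IsLocalRing

variable [IsLocalRing R]

theorem exists_isUnit_apply_of_isUnit_det [Nonempty n] {M : Matrix n n R}
    (hM : IsUnit M.det) : ∃ i j, IsUnit (M i j) := by
  by_contra! h
  have hres : (residue R).mapMatrix M = 0 := by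
    ext i j
    exact (residue_eq_zero_iff _).2 ((mem_maximalIdeal _).2 (h i j))
  apply (residue_ne_zero_iff_isUnit _).2 hM
  rw [RingHom.map_det, hres, det_zero]

theorem IsSymm.exists_isUnit_transpose_mul_mul_apply_self [Nonempty n] (h2 : IsUnit (2 : R))
    {M : Matrix n n R} (hM : M.IsSymm) (hdet : IsUnit M.det) :
    ∃ (V : Matrix n n R) (i : n), IsUnit V.det ∧ IsUnit ((Vᵀ * M * V) i i) := by
  obtain ⟨i, j, hij⟩ := exists_isUnit_apply_of_isUnit_det hdet
  by_cases hi : IsUnit (M i i)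
  · exact ⟨1, i, by simp, by simpa using hi⟩
  by_cases hj : IsUnit (M j j)
  · exact ⟨1, j, by simp, by simpa using hj⟩
  have hne : j ≠ i := by rintro rfl; exact hi hij
  refine ⟨transvection j i 1, i, by simp [hne], ?_⟩
  have hval : ((transvection j i (1 : R))ᵀ * M * transvection j i 1 : Matrix n n R) i i =
      2 * M i j + (M i i + M j j) := by
    have hT : (transvection j i (1 : R))ᵀ = transvection i j 1 := by
      simp [transvection, transpose_single]
    simp [hT, hM.apply i j]
    ring
  rw [hval]
  exact isUnit_add_of_mem_maximalIdeal (h2.mul hij)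
    (add_mem ((mem_maximalIdeal _).2 hi) ((mem_maximalIdeal _).2 hj))

theorem IsSymm.isCongrUnitDiagonal (h2 : IsUnit (2 : R)) {M : Matrix n n R} (hM : M.IsSymm)
    (hdet : IsUnit M.det) : M.IsCongrUnitDiagonal := by
  suffices ∀ k (M : Matrix (Fin k) (Fin k) R), M.IsSymm → IsUnit M.det →
      M.IsCongrUnitDiagonal from
    .of_submatrix (Fintype.equivFin n).symm
      (this _ _ (hM.submatrix _) (by rwa [det_submatrix_equiv_self]))
  intro k
  induction k with
  | zero => exact fun M _ _ => ⟨1, 0, by simp, fun i => i.elim0, Subsingleton.elim _ _⟩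
  | succ k ih =>
    intro M hM hdet
    obtain ⟨V, i, hV, hi⟩ := hM.exists_isUnit_transpose_mul_mul_apply_self h2 hdet
    -- move the unit diagonal entry into the lower right `1 × 1` block
    let e : Fin k ⊕ Fin 1 ≃ Fin (k + 1) := finSumFinEquiv.trans (Equiv.swap i (Fin.last k))
    let N := (Vᵀ * M * V).submatrix e e
    have hN : N.IsSymm := (hM.transpose_mul_mul V).submatrix e
    have hD : IsUnit N.toBlocks₂₂.det := by
      have he : e (Sum.inr 0) = i := by
        simp [e, show Fin.natAdd k (0 : Fin 1) = Fin.last k from rfl]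
      simpa [N, toBlocks₂₂, det_unique, he] using hi
    obtain ⟨W, hW, hWN⟩ := IsSymm.exists_transpose_mul_mul_eq_fromBlocks hN hD
    have hS := IsSymm.transpose_mul_mul hN W
    have hSdet : IsUnit (Wᵀ * N * W).det := by
      simp [N, det_submatrix_equiv_self, hW, hV, hdet]
    rw [hWN, isSymm_fromBlocks_iff] at hS
    rw [hWN, det_fromBlocks_zero₂₁] at hSdet
    refine .of_transpose_mul_mul hV (.of_submatrix e (.of_transpose_mul_mul hW ?_))
    rw [hWN]
    exact .fromBlocks_zero (ih _ hS.1 (isUnit_of_mul_isUnit_left hSdet)) (.of_subsingleton hD)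

theorem IsCongrUnitDiagonal.exists_dotProduct_mulVec_eq_one [HenselianRing R (maximalIdeal R)]
    [Finite (ResidueField R)] (h2 : IsUnit (2 : R)) {M : Matrix n n R}
    (hM : M.IsCongrUnitDiagonal) {i j : n} (hij : i ≠ j) : ∃ z, z ⬝ᵥ M *ᵥ z = 1 := by
  obtain ⟨U, d, -, hd, hUd⟩ := hM
  obtain ⟨x, y, hxy⟩ := exists_mul_sq_add_mul_sq_eq_one h2 (hd i) (hd j)
  refine ⟨U *ᵥ (Pi.single i x + Pi.single j y), ?_⟩
  rw [dotProduct_mulVec_mulVec_self, hUd, ← hxy]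
  simp [mulVec_add, dotProduct_add, mulVec_single, hij, hij.symm]
  ring

end IsLocalRing

end Matrix

namespace PadicInt

variable {p : ℕ} [Fact p.Prime]

theorem isUnit_two (hp : p ≠ 2) : IsUnit (2 : ℤ_[p]) := by
  rw [← notMem_maximalIdeal, ← ker_toZMod, RingHom.mem_ker, map_ofNat]
  exact Ring.two_ne_zero (by rwa [ZMod.ringChar_zmod_n p])

theorem natCast_mem_maximalIdeal : (p : ℤ_[p]) ∈ maximalIdeal ℤ_[p] := by
  rw [maximalIdeal_eq_span_p]
  exact Ideal.mem_span_singleton_self _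

end PadicInt

section HermitianGram

variable {R : Type*} [CommRing R]

/-- The matrix `M` of `statement17`, with `r` in place of `p` and `c` in place of `1/2`. -/
def hermitianGram (α β a b c r : R) : Matrix (Fin 4) (Fin 4) R :=
  !![α, 0, b * c, a * c;
     0, α * r, a * c, r * b * c;
     b * c, a * c, β, 0;
     a * c, r * b * c, 0, β * r]

theorem det_hermitianGram (α β a b c r : R) :
    (hermitianGram α β a b c r).det = a ^ 4 * c ^ 4 + r *
      (b ^ 4 * c ^ 4 * r - 2 * a ^ 2 * b ^ 2 * c ^ 4 - 2 * α * β * b ^ 2 * c ^ 2 * r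
        - 2 * α * β * a ^ 2 * c ^ 2 + α ^ 2 * β ^ 2 * r) := by
  simp [hermitianGram, det_succ_row_zero, Fin.sum_univ_succ, Fin.succAbove]
  ring

theorem isSymm_hermitianGram (α β a b c r : R) : (hermitianGram α β a b c r).IsSymm := by
  ext i j
  fin_cases i <;> fin_cases j <;> rfl

end HermitianGram

/-- let `p` be an odd prime (ramified in the imaginary quadratic
field `L`, `B_p = ℤ_p[π]`, `π π̄ = p`).  For an integral binary hermitian form
with matrix `[[α, γ], [γ̄, β]]`, `γ = (a + bπ)/π`, `a ∈ ℤ_pˣ`, the associated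
`4 × 4` matrix of the underlying quadratic form over `ℤ_p` in the coordinates
`x = x₁ + x₂ π`, `y = y₁ + y₂ π` is
`[[α, 0, b/2, a/2], [0, αp, a/2, pb/2], [b/2, a/2, β, 0], [a/2, pb/2, 0, βp]]`;
its determinant is `≡ a⁴/16 (mod p)`, in particular a `p`-adic unit, so the
form is `ℤ_p`-equivalent to a unimodular diagonal form and represents `1`
over `ℤ_p`. -/
theorem statement17
    (p : ℕ) [Fact p.Prime] (hp : p ≠ 2)
    (α β a b : ℤ_[p]) (ha : IsUnit a) :
    let c : ℤ_[p] := Ring.inverse 2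
    let M : Matrix (Fin 4) (Fin 4) ℤ_[p] :=
      !![α, 0, b * c, a * c;
         0, α * p, a * c, (p : ℤ_[p]) * b * c;
         b * c, a * c, β, 0;
         a * c, (p : ℤ_[p]) * b * c, 0, β * p]
    -- the determinant is `a⁴/16` modulo `p`
    (∃ k : ℤ_[p], M.det = a ^ 4 * c ^ 4 + (p : ℤ_[p]) * k) ∧
    -- in particular it is a `p`-adic unit
    IsUnit M.det ∧
    -- the form is `ℤ_p`-equivalent to a unimodular diagonal form
    (∃ (U : Matrix (Fin 4) (Fin 4) ℤ_[p]) (d : Fin 4 → ℤ_[p]),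
      IsUnit U.det ∧ (∀ i, IsUnit (d i)) ∧
      U.transpose * M * U = Matrix.diagonal d) ∧
    -- and it represents `1` over `ℤ_p`
    (∃ z : Fin 4 → ℤ_[p], dotProduct z (M.mulVec z) = 1) := by
  intro c M
  have h2 := PadicInt.isUnit_two hp
  have hdet : IsUnit M.det := by
    rw [show M = hermitianGram α β a b c p from rfl, det_hermitianGram]
    exact isUnit_add_of_mem_maximalIdeal ((ha.pow 4).mul (h2.ringInverse.pow 4))
      (Ideal.mul_mem_right _ _ PadicInt.natCast_mem_maximalIdeal)
  have hcongr : M.IsCongrUnitDiagonal :=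
    (isSymm_hermitianGram α β a b c (p : ℤ_[p])).isCongrUnitDiagonal h2 hdet
  exact ⟨⟨_, det_hermitianGram α β a b c (p : ℤ_[p])⟩, hdet, hcongr,
    hcongr.exists_dotProduct_mulVec_eq_one h2 (show (0 : Fin 4) ≠ 1 by decide)⟩
end
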